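/- arXiv:2111.00486 — 9 statements merged into one kernel-verified Lean document; each statement's English description precedes it below -/
import Mathlib

section
/- Let q be a positive integer. The number of quadruples (a,b,c,d) with entries in {0,1,...,q-1} satisfying ab = cd is at most C·q²·log(q+1) for some absolute constant C. -/
/-!
Solutions with `a * b = 0` also have `c * d = 0`, so there are at most `(2q)²` of them.
A solution with `a * b ≠ 0` factors as `a = g x`, `c = g y`, `b = y t`, `d = x t` with all four
factors positive, and for fixed `(x, y)` both `g` and `t` are at most `q / max x y`. The other
solutions therefore number at most `q² ∑_{x, y ≤ q} max(x, y)⁻² ≤ 2 q² (1 + log q)`: the terms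
with `max(x, y) = x` contribute at most `x / x² = 1 / x` for each `x`.
-/

open Finset Real

theorem exists_eq_mul_of_mul_eq_mul {α : Type*} [CommMonoidWithZero α] [IsCancelMulZero α]
    [DecompositionMonoid α] {a b c d : α} (ha : a ≠ 0) (h : a * b = c * d) :
    ∃ g x y t, a = g * x ∧ c = g * y ∧ b = y * t ∧ d = x * t := by
  obtain ⟨g, x, ⟨y, rfl⟩, ⟨t, rfl⟩, rfl⟩ := exists_dvd_and_dvd_of_dvd_mul (Dvd.intro b h)
  refine ⟨g, x, y, t, rfl, rfl, mul_left_cancel₀ ha ?_, rfl⟩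
  rw [h]
  ac_rfl

theorem sum_Icc_ite_le_inv (n x : ℕ) :
    ∑ y ∈ Icc 1 n, (if y ≤ x then ((x : ℝ) ^ 2)⁻¹ else 0) ≤ (x : ℝ)⁻¹ := by
  rw [← sum_filter, sum_const, nsmul_eq_mul]
  have hcard : #{y ∈ Icc 1 n | y ≤ x} ≤ x :=
    (card_le_card fun y hy => by simp_all).trans (Nat.card_Icc 1 x).le
  calc (#{y ∈ Icc 1 n | y ≤ x} : ℝ) * ((x : ℝ) ^ 2)⁻¹ ≤ x * ((x : ℝ) ^ 2)⁻¹ := by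
        gcongr
    _ = (x : ℝ)⁻¹ := by
        rcases eq_or_ne (x : ℝ) 0 with hx | hx
        · simp [hx]
        · field_simp

theorem sum_inv_max_sq_le (n : ℕ) :
    ∑ p ∈ Icc 1 n ×ˢ Icc 1 n, (((max p.1 p.2 : ℕ) : ℝ) ^ 2)⁻¹ ≤ 2 * (1 + log n) := by
  have hsplit : ∀ x y : ℕ, (((max x y : ℕ) : ℝ) ^ 2)⁻¹ ≤
      (if y ≤ x then ((x : ℝ) ^ 2)⁻¹ else 0) + (if x ≤ y then ((y : ℝ) ^ 2)⁻¹ else 0) := by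
    intro x y
    rcases le_total y x with h | h
    · rw [max_eq_left h, if_pos h, le_add_iff_nonneg_right]
      positivity
    · rw [max_eq_right h, if_pos h, le_add_iff_nonneg_left]
      positivity
  have hharmonic : ∑ x ∈ Icc 1 n, (x : ℝ)⁻¹ ≤ 1 + log n := by
    simpa [harmonic_eq_sum_Icc] using harmonic_le_one_add_log n
  have hhalf : ∑ x ∈ Icc 1 n, ∑ y ∈ Icc 1 n, (if y ≤ x then ((x : ℝ) ^ 2)⁻¹ else 0)
      ≤ 1 + log n :=
    (sum_le_sum fun x _ => sum_Icc_ite_le_inv n x).trans hharmonic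
  calc ∑ p ∈ Icc 1 n ×ˢ Icc 1 n, (((max p.1 p.2 : ℕ) : ℝ) ^ 2)⁻¹
      ≤ ∑ x ∈ Icc 1 n, ∑ y ∈ Icc 1 n,
          ((if y ≤ x then ((x : ℝ) ^ 2)⁻¹ else 0) + (if x ≤ y then ((y : ℝ) ^ 2)⁻¹ else 0)) := by
        rw [sum_product]
        gcongr with x _ y _
        exact hsplit x y
    _ = ∑ x ∈ Icc 1 n, ∑ y ∈ Icc 1 n, (if y ≤ x then ((x : ℝ) ^ 2)⁻¹ else 0)
        + ∑ x ∈ Icc 1 n, ∑ y ∈ Icc 1 n, (if y ≤ x then ((x : ℝ) ^ 2)⁻¹ else 0) := by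
        simp only [sum_add_distrib]
        congr 1
        exact sum_comm
    _ ≤ 2 * (1 + log n) := by linarith

def mulEqMulQuadruples (q : ℕ) : Finset ((ℕ × ℕ) × (ℕ × ℕ)) :=
  ((range q ×ˢ range q) ×ˢ (range q ×ˢ range q)).filter fun x => x.1.1 * x.1.2 = x.2.1 * x.2.2

theorem card_filter_mul_eq_zero_le (q : ℕ) : #{p ∈ range q ×ˢ range q | p.1 * p.2 = 0} ≤ 2 * q := by
  calc #{p ∈ range q ×ˢ range q | p.1 * p.2 = 0}
      ≤ #(({0} ×ˢ range q) ∪ (range q ×ˢ {0})) := by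
        refine card_le_card fun p hp => ?_
        simp only [mem_filter, mem_product, mem_range, mul_eq_zero] at hp
        simp only [mem_union, mem_product, mem_singleton, mem_range]
        tauto
    _ ≤ 2 * q := by
        refine (card_union_le _ _).trans ?_
        simp only [card_product, card_singleton, card_range]
        omega

theorem card_filter_mulEqMulQuadruples_mul_eq_zero_le (q : ℕ) :
    #{x ∈ mulEqMulQuadruples q | x.1.1 * x.1.2 = 0} ≤ (2 * q) ^ 2 := by
  set Z := {p ∈ range q ×ˢ range q | p.1 * p.2 = 0}
  calc #{x ∈ mulEqMulQuadruples q | x.1.1 * x.1.2 = 0} ≤ #(Z ×ˢ Z) := by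
        refine card_le_card fun x hx => ?_
        simp only [mulEqMulQuadruples, Z, mem_filter, mem_product] at hx ⊢
        exact ⟨⟨hx.1.1.1, hx.2⟩, hx.1.1.2, hx.1.2 ▸ hx.2⟩
    _ ≤ (2 * q) ^ 2 := by
        rw [card_product, sq]
        exact Nat.mul_le_mul (card_filter_mul_eq_zero_le q) (card_filter_mul_eq_zero_le q)

theorem filter_mulEqMulQuadruples_mul_ne_zero_subset (q : ℕ) :
    {x ∈ mulEqMulQuadruples q | x.1.1 * x.1.2 ≠ 0} ⊆
      (Icc 1 q ×ˢ Icc 1 q).biUnion fun xy =>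
        (Icc 1 (q / max xy.1 xy.2) ×ˢ Icc 1 (q / max xy.1 xy.2)).image fun gt =>
          ((gt.1 * xy.1, xy.2 * gt.2), (gt.1 * xy.2, xy.1 * gt.2)) := by
  rintro ⟨⟨a, b⟩, c, d⟩ hx
  simp only [mulEqMulQuadruples, mem_filter, mem_product, mem_range, mul_ne_zero_iff] at hx
  obtain ⟨⟨⟨⟨ha, hb⟩, hc, hd⟩, h⟩, ha0, hb0⟩ := hx
  obtain ⟨g, x, y, t, rfl, rfl, rfl, rfl⟩ := exists_eq_mul_of_mul_eq_mul ha0 h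
  have hg : 0 < g := Nat.pos_of_ne_zero (left_ne_zero_of_mul ha0)
  have hx : 0 < x := Nat.pos_of_ne_zero (right_ne_zero_of_mul ha0)
  have hy : 0 < y := Nat.pos_of_ne_zero (left_ne_zero_of_mul hb0)
  have ht : 0 < t := Nat.pos_of_ne_zero (right_ne_zero_of_mul hb0)
  have hgM : g * max x y ≤ q := by rcases max_choice x y with h | h <;> rw [h] <;> omega
  have htM : t * max x y ≤ q := by
    rcases max_choice x y with h | h <;> rw [h, mul_comm] <;> omega
  simp only [mem_biUnion, mem_image, mem_product, mem_Icc, Prod.exists]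
  refine ⟨x, y, ⟨⟨hx, ?_⟩, hy, ?_⟩, g, t, ⟨⟨hg, ?_⟩, ht, ?_⟩, rfl⟩
  · nlinarith
  · nlinarith
  · exact (Nat.le_div_iff_mul_le (by omega)).mpr hgM
  · exact (Nat.le_div_iff_mul_le (by omega)).mpr htM

theorem card_filter_mulEqMulQuadruples_mul_ne_zero_le (q : ℕ) :
    (#{x ∈ mulEqMulQuadruples q | x.1.1 * x.1.2 ≠ 0} : ℝ) ≤
      q ^ 2 * ∑ p ∈ Icc 1 q ×ˢ Icc 1 q, (((max p.1 p.2 : ℕ) : ℝ) ^ 2)⁻¹ := by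
  calc (#{x ∈ mulEqMulQuadruples q | x.1.1 * x.1.2 ≠ 0} : ℝ)
      ≤ ∑ p ∈ Icc 1 q ×ˢ Icc 1 q, (((q / max p.1 p.2 : ℕ) : ℝ) ^ 2) := by
        have hcard : #{x ∈ mulEqMulQuadruples q | x.1.1 * x.1.2 ≠ 0} ≤
            ∑ p ∈ Icc 1 q ×ˢ Icc 1 q, (q / max p.1 p.2) ^ 2 :=
          (card_le_card (filter_mulEqMulQuadruples_mul_ne_zero_subset q)).trans <|
            card_biUnion_le.trans <| sum_le_sum fun p _ => card_image_le.trans (by simp [sq])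
        exact_mod_cast hcard
    _ ≤ ∑ p ∈ Icc 1 q ×ˢ Icc 1 q, (q : ℝ) ^ 2 * (((max p.1 p.2 : ℕ) : ℝ) ^ 2)⁻¹ := by
        gcongr with p
        rw [← div_eq_mul_inv, ← div_pow]
        gcongr
        exact Nat.cast_div_le
    _ = q ^ 2 * ∑ p ∈ Icc 1 q ×ˢ Icc 1 q, (((max p.1 p.2 : ℕ) : ℝ) ^ 2)⁻¹ := (mul_sum ..).symm

/-- There is an absolute constant `C` such that for all positive integers `q`,
the number of quadruples `(a,b,c,d)` with entries in `{0,…,q-1}` satisfying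
`a*b = c*d` is at most `C * q^2 * log (q+1)`. -/
theorem stmt1 :
    ∃ C : ℝ, 0 < C ∧ ∀ q : ℕ, 0 < q →
      ((((Finset.range q ×ˢ Finset.range q) ×ˢ (Finset.range q ×ˢ Finset.range q)).filter
          (fun x => x.1.1 * x.1.2 = x.2.1 * x.2.2)).card : ℝ)
        ≤ C * (q : ℝ) ^ 2 * Real.log (q + 1) := by
  refine ⟨11, by norm_num, fun q hq => ?_⟩
  have hsplit := card_filter_add_card_filter_not (s := mulEqMulQuadruples q)
    fun x => x.1.1 * x.1.2 = 0
  have hzero : (#{x ∈ mulEqMulQuadruples q | x.1.1 * x.1.2 = 0} : ℝ) ≤ 4 * q ^ 2 := by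
    exact_mod_cast (card_filter_mulEqMulQuadruples_mul_eq_zero_le q).trans_eq (by ring)
  have hnonzero : (#{x ∈ mulEqMulQuadruples q | x.1.1 * x.1.2 ≠ 0} : ℝ) ≤
      q ^ 2 * (2 * (1 + log q)) :=
    (card_filter_mulEqMulQuadruples_mul_ne_zero_le q).trans (by gcongr; exact sum_inv_max_sq_le q)
  have hq1 : (1 : ℝ) ≤ q := by exact_mod_cast hq
  have hlog_le : log q ≤ log (q + 1) := log_le_log (by linarith) (by linarith)
  have hlog_two : log 2 ≤ log (q + 1) := log_le_log (by norm_num) (by linarith)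
  have hsix : 6 ≤ 9 * log (q + 1) := by linarith [log_two_gt_d9]
  calc (#(mulEqMulQuadruples q) : ℝ)
      = #{x ∈ mulEqMulQuadruples q | x.1.1 * x.1.2 = 0}
        + #{x ∈ mulEqMulQuadruples q | x.1.1 * x.1.2 ≠ 0} := by exact_mod_cast hsplit.symm
    _ ≤ q ^ 2 * (6 + 2 * log q) := by linarith
    _ ≤ q ^ 2 * (11 * log (q + 1)) := by gcongr; linarith
    _ = 11 * q ^ 2 * log (q + 1) := by ring
end

section
/- Let U = u₁ + ... + u_k be a sum of k independent random variables, each uniformly distributed on the set of integers {−(M−1)/2, ..., (M−1)/2} for an odd positive integer M. Then for every integer t, Pr[U = 0] ≥ Pr[U = t]. -/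
/-!
The number of `k`-tuples in `[-m, m]ᵏ` with sum `t` is the sum of the `(k-1)`-tuple counts
over the window `[t - m, t + m]`. Window sums preserve being even and antitone on `[0, ∞)`:
shifting the window from `t ≥ 0` to `t + 1` trades `f (t + m + 1)` for `f (t - m) = f |t - m|`,
and `|t - m| ≤ t + m + 1`. So by induction on `k` the count is even and unimodal, hence
maximal at `0`.
-/

open Finset

section TupleSum

variable {G : Type*} [AddCommGroup G] [DecidableEq G]

noncomputable def tupleSumCount (S : Finset G) (k : ℕ) (t : G) : ℕ :=
  #{u ∈ Fintype.piFinset fun _ : Fin k => S | ∑ i, u i = t}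

theorem tupleSumCount_zero (S : Finset G) (t : G) :
    tupleSumCount S 0 t = if t = 0 then 1 else 0 := by
  by_cases ht : t = 0 <;> simp [tupleSumCount, ht, eq_comm]

theorem tupleSumCount_succ (S : Finset G) (k : ℕ) (t : G) :
    tupleSumCount S (k + 1) t = ∑ s ∈ S, tupleSumCount S k (t - s) := by
  have split : tupleSumCount S (k + 1) t =
      #{p ∈ S ×ˢ Fintype.piFinset (fun _ : Fin k => S) | p.1 + ∑ i, p.2 i = t} := by
    refine card_equiv (Fin.consEquiv fun _ => G).symm fun u => ?_
    simp [Fin.sum_univ_succ, Fin.forall_fin_succ, Fin.tail]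
  rw [split, card_filter, sum_product]
  refine sum_congr rfl fun s _ => ?_
  rw [← card_filter, tupleSumCount]
  congr! 2 with u
  exact eq_sub_iff_add_eq'.symm

end TupleSum

theorem Function.Even.apply_abs {β γ : Type*} [AddGroup β] [LinearOrder β] {f : β → γ}
    (hf : f.Even) (x : β) : f |x| = f x := by
  rcases abs_choice x with h | h <;> rw [h]
  exact hf x

theorem Function.Even.apply_le_apply_zero {β : Type*} [Preorder β] {f : ℤ → β} (hf : f.Even)
    (hanti : AntitoneOn f (Set.Ici 0)) (t : ℤ) : f t ≤ f 0 :=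
  hf.apply_abs t ▸ hanti Set.self_mem_Ici (abs_nonneg t) (abs_nonneg t)

section WindowSum

variable {α : Type*} [AddCommMonoid α]

noncomputable def windowSum (m : ℤ) (f : ℤ → α) (t : ℤ) : α :=
  ∑ j ∈ Icc (t - m) (t + m), f j

theorem sum_Icc_neg_sub_eq_windowSum (m : ℤ) (f : ℤ → α) (t : ℤ) :
    ∑ s ∈ Icc (-m) m, f (t - s) = windowSum m f t :=
  sum_nbij' (t - ·) (t - ·) (fun s hs => by rw [mem_Icc] at hs ⊢; omega)
    (fun j hj => by rw [mem_Icc] at hj ⊢; omega)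
    (by simp) (by simp) (fun _ _ => rfl)

theorem even_windowSum {f : ℤ → α} (hf : f.Even) (m : ℤ) :
    (windowSum m f).Even := fun t =>
  sum_nbij' (- ·) (- ·) (fun j hj => by rw [mem_Icc] at hj ⊢; omega)
    (fun j hj => by rw [mem_Icc] at hj ⊢; omega)
    (by simp) (by simp) (fun j _ => (hf j).symm)

theorem windowSum_add_one_add (f : ℤ → α) {m : ℤ} (hm : 0 ≤ m) (t : ℤ) :
    windowSum m f (t + 1) + f (t - m) = windowSum m f t + f (t + m + 1) := by
  have left : insert (t - m) (Icc (t + 1 - m) (t + 1 + m)) = Icc (t - m) (t + m + 1) := by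
    ext; simp only [mem_insert, mem_Icc]; omega
  have right : insert (t + m + 1) (Icc (t - m) (t + m)) = Icc (t - m) (t + m + 1) :=
    insert_Icc_right_eq_Icc_add_one (by omega)
  unfold windowSum
  rw [add_comm, ← sum_insert (by simp), left, ← right, sum_insert (by simp), add_comm]

variable [PartialOrder α] [IsOrderedCancelAddMonoid α]

theorem antitoneOn_windowSum {f : ℤ → α} (hf : f.Even)
    (hanti : AntitoneOn f (Set.Ici 0)) {m : ℤ} (hm : 0 ≤ m) :
    AntitoneOn (windowSum m f) (Set.Ici 0) := by
  refine antitoneOn_of_add_one_le Set.ordConnected_Ici fun t _ (ht : 0 ≤ t) _ => ?_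
  have far_le_near : f (t + m + 1) ≤ f (t - m) := by
    rw [← hf.apply_abs (t - m)]
    exact hanti (Set.mem_Ici.2 (abs_nonneg _)) (Set.mem_Ici.2 (by omega))
      (abs_le.2 ⟨by omega, by omega⟩)
  exact le_of_add_le_add_right
    ((windowSum_add_one_add f hm t).trans_le (add_le_add_right far_le_near _))

end WindowSum

theorem tupleSumCount_Icc_succ (m : ℤ) (k : ℕ) :
    tupleSumCount (Icc (-m) m) (k + 1) = windowSum m (tupleSumCount (Icc (-m) m) k) := by
  funext t
  rw [tupleSumCount_succ, sum_Icc_neg_sub_eq_windowSum]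

theorem even_tupleSumCount_Icc (m : ℤ) (k : ℕ) : (tupleSumCount (Icc (-m) m) k).Even := by
  induction k with
  | zero => intro t; simp [tupleSumCount_zero]
  | succ k ih => rw [tupleSumCount_Icc_succ]; exact even_windowSum ih m

theorem antitoneOn_tupleSumCount_Icc {m : ℤ} (hm : 0 ≤ m) (k : ℕ) :
    AntitoneOn (tupleSumCount (Icc (-m) m) k) (Set.Ici 0) := by
  induction k with
  | zero =>
    intro a (ha : 0 ≤ a) b _ hab
    simp only [tupleSumCount_zero]
    split_ifs <;> omega
  | succ k ih =>
    rw [tupleSumCount_Icc_succ]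
    exact antitoneOn_windowSum (even_tupleSumCount_Icc m k) ih hm

theorem stmt6_general (M k : ℕ) (hM : 0 < M) (t : ℤ) :
    (((Fintype.piFinset fun _ : Fin k =>
          Finset.Icc (-(((M : ℤ) - 1) / 2)) (((M : ℤ) - 1) / 2)).filter
        (fun u => ∑ i, u i = t)).card : ℝ) / (M : ℝ) ^ k
      ≤ (((Fintype.piFinset fun _ : Fin k =>
          Finset.Icc (-(((M : ℤ) - 1) / 2)) (((M : ℤ) - 1) / 2)).filter
        (fun u => ∑ i, u i = 0)).card : ℝ) / (M : ℝ) ^ k := by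
  set m : ℤ := ((M : ℤ) - 1) / 2
  have hm : 0 ≤ m := by omega
  change (tupleSumCount (Icc (-m) m) k t : ℝ) / _ ≤ (tupleSumCount (Icc (-m) m) k 0 : ℝ) / _
  gcongr
  exact (even_tupleSumCount_Icc m k).apply_le_apply_zero (antitoneOn_tupleSumCount_Icc hm k) t

/-- For `U = u₁ + ⋯ + u_k` a sum of `k` i.i.d. random variables uniform on the
integers `{-(M-1)/2, …, (M-1)/2}` (`M` odd), `Pr[U = 0] ≥ Pr[U = t]` for every
integer `t`. Probabilities are expressed as counting fractions over the product
space. -/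
theorem stmt6 (M k : ℕ) (hM : 0 < M) (hModd : Odd M) (hk : 1 ≤ k) (t : ℤ) :
    (((Fintype.piFinset fun _ : Fin k =>
          Finset.Icc (-(((M : ℤ) - 1) / 2)) (((M : ℤ) - 1) / 2)).filter
        (fun u => ∑ i, u i = t)).card : ℝ) / (M : ℝ) ^ k
      ≤ (((Fintype.piFinset fun _ : Fin k =>
          Finset.Icc (-(((M : ℤ) - 1) / 2)) (((M : ℤ) - 1) / 2)).filter
        (fun u => ∑ i, u i = 0)).card : ℝ) / (M : ℝ) ^ k :=
  stmt6_general M k hM t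
end

section
/- Let U be the sum of k independent random variables each uniform on the integers {−(M−1)/2,...,(M−1)/2} with M odd, and suppose M divides no nonzero value of U other than multiples of M within its range. Then Pr[U = 0 | U ≡ 0 (mod M)] ≥ 1/k. -/
/-!
Write `m = (M - 1) / 2` and let `N_k(t)` be the number of points of `{-m, …, m}^k` with
coordinate sum `t`. Then `N_k` is even and nonincreasing on `t ≥ 0`: by the convolution
`N_{k+1}(t) = ∑_{|a| ≤ m} N_k(t - a)`, `N_{k+1}(t) - N_{k+1}(t + 1) = N_k(t - m) - N_k(t + m + 1)`,
which is nonnegative by induction since `|t - m| ≤ t + m + 1`. Hence every fibre of the sum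
has at most `N_k(0)` points, and a sum divisible by `M` is one of the multiples of `M` in
`[-km, km]`; since `2km < kM`, there are at most `k` of them.
-/

open Finset

theorem sum_mem_Icc_of_mem_piFinset {ι α : Type*} [Fintype ι] [DecidableEq ι] [AddCommMonoid α]
    [PartialOrder α] [IsOrderedAddMonoid α] [LocallyFiniteOrder α] {a b : α} {u : ι → α}
    (hu : u ∈ Fintype.piFinset fun _ => Icc a b) :
    ∑ i, u i ∈ Icc (Fintype.card ι • a) (Fintype.card ι • b) := by
  rw [Fintype.mem_piFinset] at hu
  exact mem_Icc.2 ⟨card_nsmul_le_sum _ _ _ fun i _ => (mem_Icc.1 (hu i)).1,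
    sum_le_card_nsmul _ _ _ fun i _ => (mem_Icc.1 (hu i)).2⟩

theorem Int.card_filter_dvd_Icc_neg_le {M n : ℤ} (hM : 0 < M) (hn : 0 ≤ n) :
    (#{t ∈ Icc (-n) n | M ∣ t} : ℤ) ≤ 2 * (n / M) + 1 := by
  have hsub : {t ∈ Icc (-n) n | M ∣ t} ⊆ (Icc (-(n / M)) (n / M)).image (M * ·) := by
    simp only [subset_iff, mem_filter, mem_Icc, mem_image]
    rintro _ ⟨⟨hlo, hhi⟩, j, rfl⟩
    refine ⟨j, ⟨?_, ?_⟩, rfl⟩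
    · rw [neg_le, Int.le_ediv_iff_mul_le hM]; linarith
    · rw [Int.le_ediv_iff_mul_le hM]; linarith
  have hq : 0 ≤ n / M := Int.ediv_nonneg hn hM.le
  calc (#{t ∈ Icc (-n) n | M ∣ t} : ℤ) ≤ #(Icc (-(n / M)) (n / M)) :=
        Nat.cast_le.2 ((card_le_card hsub).trans card_image_le)
    _ = 2 * (n / M) + 1 := by rw [Int.card_Icc, Int.toNat_of_nonneg (by omega)]; ring

theorem apply_le_apply_of_abs_le {α : Type*} [Preorder α] {f : ℤ → α}
    (hf : ∀ t, f (-t) = f t) (hstep : ∀ t, 0 ≤ t → f (t + 1) ≤ f t) {r s : ℤ} (h : |r| ≤ |s|) :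
    f s ≤ f r := by
  have habs (t : ℤ) : f |t| = f t := by rcases abs_choice t with ht | ht <;> simp [ht, hf]
  have hanti : Antitone fun n : ℕ => f n := antitone_nat_of_succ_le fun n => by
    exact_mod_cast hstep n n.cast_nonneg
  rw [← habs s, ← habs r, ← Int.toNat_of_nonneg (abs_nonneg s),
    ← Int.toNat_of_nonneg (abs_nonneg r)]
  exact hanti (Int.toNat_le_toNat h)

noncomputable def boxSumCount (m : ℤ) (k : ℕ) (t : ℤ) : ℕ :=
  ((Fintype.piFinset fun _ : Fin k => Icc (-m) m).filter (fun u => ∑ i, u i = t)).card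

section boxSumCount

variable {m : ℤ}

theorem boxSumCount_zero_dim (m t : ℤ) : boxSumCount m 0 t = if t = 0 then 1 else 0 := by
  by_cases ht : t = 0 <;> simp [boxSumCount, ht, eq_comm]

theorem boxSumCount_neg (m : ℤ) (k : ℕ) (t : ℤ) : boxSumCount m k (-t) = boxSumCount m k t := by
  refine card_nbij' (-·) (-·) ?_ ?_ (fun u _ => neg_neg u) (fun u _ => neg_neg u) <;>
  · intro u hu
    simp only [coe_filter, Set.mem_ofPred_eq, Fintype.mem_piFinset, mem_Icc, Pi.neg_apply,
      sum_neg_distrib] at hu ⊢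
    exact ⟨fun i => ⟨neg_le_neg (hu.1 i).2, neg_le.1 (hu.1 i).1⟩, by linarith [hu.2]⟩

theorem boxSumCount_succ (m : ℤ) (k : ℕ) (t : ℤ) :
    boxSumCount m (k + 1) t = ∑ a ∈ Icc (-m) m, boxSumCount m k (t - a) := by
  unfold boxSumCount
  rw [card_eq_sum_card_fiberwise (f := fun u => u 0) (t := Icc (-m) m)
    fun u hu => Fintype.mem_piFinset.1 (mem_filter.1 hu).1 0]
  refine sum_congr rfl fun a ha => card_nbij' Fin.tail (fun v => Fin.cons a v) ?_ ?_ ?_ ?_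
  · intro u hu
    simp only [coe_filter, Set.mem_ofPred_eq, mem_filter, Fin.mem_piFinset_iff_zero_tail,
      Fin.sum_univ_succ] at hu ⊢
    obtain ⟨⟨⟨-, htail⟩, hsum⟩, rfl⟩ := hu
    exact ⟨htail, by rw [← hsum]; simp [Fin.tail]⟩
  · intro v hv
    simp only [coe_filter, Set.mem_ofPred_eq, mem_filter, Fin.mem_piFinset_iff_zero_tail,
      Fin.sum_univ_succ, Fin.cons_zero, Fin.tail_cons, Fin.cons_succ] at hv ⊢
    exact ⟨⟨⟨ha, hv.1⟩, by rw [hv.2]; ring⟩, trivial⟩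
  · intro u hu
    simp only [coe_filter, Set.mem_ofPred_eq] at hu
    rw [← hu.2]
    exact Fin.cons_self_tail u
  · intro v _
    exact Fin.tail_cons _ _

theorem boxSumCount_succ_add_one_add (hm : 0 ≤ m) (k : ℕ) (t : ℤ) :
    boxSumCount m (k + 1) (t + 1) + boxSumCount m k (t - m) =
      boxSumCount m (k + 1) t + boxSumCount m k (t + m + 1) := by
  have hshift : boxSumCount m (k + 1) (t + 1) =
      ∑ b ∈ Icc (-m - 1) (m - 1), boxSumCount m k (t - b) := by
    have : Icc (-m) m = (Icc (-m - 1) (m - 1)).map (addRightEmbedding 1) := by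
      rw [map_add_right_Icc]; ring_nf
    rw [boxSumCount_succ, this, sum_map]
    exact sum_congr rfl fun b _ => by rw [addRightEmbedding_apply]; ring_nf
  have hbot : Icc (-m - 1) m = insert (-m - 1) (Icc (-m) m) := by
    ext; simp only [mem_Icc, mem_insert]; omega
  have htop : Icc (-m - 1) m = insert m (Icc (-m - 1) (m - 1)) := by
    ext; simp only [mem_Icc, mem_insert]; omega
  have hsplit : boxSumCount m k (t - (-m - 1)) + ∑ b ∈ Icc (-m) m, boxSumCount m k (t - b) =
      boxSumCount m k (t - m) + ∑ b ∈ Icc (-m - 1) (m - 1), boxSumCount m k (t - b) := by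
    rw [← sum_insert (f := fun b => boxSumCount m k (t - b)) (by simp),
      ← sum_insert (f := fun b => boxSumCount m k (t - b)) (by simp), ← hbot, ← htop]
  rw [show t - (-m - 1) = t + m + 1 by ring] at hsplit
  rw [hshift, boxSumCount_succ]
  omega

theorem boxSumCount_le_of_abs_le (hm : 0 ≤ m) (k : ℕ) {r s : ℤ} (h : |r| ≤ |s|) :
    boxSumCount m k s ≤ boxSumCount m k r := by
  induction k generalizing r s with
  | zero =>
    rw [boxSumCount_zero_dim, boxSumCount_zero_dim]
    split_ifs <;> simp_all
  | succ k ih =>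
    refine apply_le_apply_of_abs_le (boxSumCount_neg m _) (fun t ht => ?_) h
    have := boxSumCount_succ_add_one_add hm k t
    have := ih (r := t - m) (s := t + m + 1) (abs_le_abs (by omega) (by omega))
    omega

end boxSumCount

theorem card_filter_dvd_sum_le {m M : ℤ} {k : ℕ} (hm : 0 ≤ m) (hM : 2 * m < M) (hk : 1 ≤ k) :
    #{u ∈ Fintype.piFinset (fun _ : Fin k => Icc (-m) m) | M ∣ ∑ i, u i} ≤
      k * boxSumCount m k 0 := by
  have hM0 : 0 < M := by omega
  have hmaps : ∀ u ∈ {u ∈ Fintype.piFinset (fun _ : Fin k => Icc (-m) m) | M ∣ ∑ i, u i},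
      ∑ i, u i ∈ {t ∈ Icc (-(k * m)) (k * m) | M ∣ t} := by
    intro u hu
    rw [mem_filter] at hu ⊢
    have := sum_mem_Icc_of_mem_piFinset hu.1
    simp only [Fintype.card_fin, nsmul_eq_mul, mul_neg] at this
    exact ⟨this, hu.2⟩
  have hfiber : ∀ t ∈ {t ∈ Icc (-(k * m)) (k * m) | M ∣ t},
      #{u ∈ {u ∈ Fintype.piFinset (fun _ : Fin k => Icc (-m) m) | M ∣ ∑ i, u i} | ∑ i, u i = t}
        ≤ boxSumCount m k 0 := fun t _ =>
    (card_le_card (filter_subset_filter _ (filter_subset _ _))).trans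
      (boxSumCount_le_of_abs_le hm k (by simp))
  have hmultiples : #{t ∈ Icc (-(k * m)) (k * m) | M ∣ t} ≤ k := by
    have hcard := Int.card_filter_dvd_Icc_neg_le hM0 (n := k * m) (by positivity)
    have hq := Int.ediv_mul_le (k * m) hM0.ne'
    have : 2 * ((k * m) / M) * M < k * M := by nlinarith
    have := lt_of_mul_lt_mul_right this hM0.le
    omega
  calc _ ≤ boxSumCount m k 0 * #{t ∈ Icc (-(k * m)) (k * m) | M ∣ t} :=
        card_le_mul_card_image_of_maps_to hmaps _ hfiber
    _ ≤ k * boxSumCount m k 0 := by rw [mul_comm]; exact Nat.mul_le_mul_right _ hmultiples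

theorem stmt7_general (M k : ℕ) (hM : 3 ≤ M) (hk : 1 ≤ k) :
    (1 : ℝ) / k ≤
      (((Fintype.piFinset fun _ : Fin k =>
            Finset.Icc (-(((M : ℤ) - 1) / 2)) (((M : ℤ) - 1) / 2)).filter
          (fun u => ∑ i, u i = 0)).card : ℝ) /
        (((Fintype.piFinset fun _ : Fin k =>
            Finset.Icc (-(((M : ℤ) - 1) / 2)) (((M : ℤ) - 1) / 2)).filter
          (fun u => (M : ℤ) ∣ ∑ i, u i)).card : ℝ) := by
  set m : ℤ := ((M : ℤ) - 1) / 2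
  have hm : 0 ≤ m := by omega
  have hmM : 2 * m < M := by omega
  have hzero : 0 ∈ {u ∈ Fintype.piFinset (fun _ : Fin k => Icc (-m) m) | (M : ℤ) ∣ ∑ i, u i} := by
    simp [hm]
  rw [div_le_div_iff₀ (by positivity) (by exact_mod_cast card_pos.2 ⟨_, hzero⟩), one_mul,
    mul_comm]
  exact_mod_cast card_filter_dvd_sum_le hm hmM hk

/-- For `U` the sum of `k` i.i.d. random variables uniform on `{-(M-1)/2, …, (M-1)/2}`
(`M ≥ 3` odd), the conditional probability `Pr[U = 0 ∣ M ∣ U]` is at least `1/k`.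
Probabilities are expressed as counting fractions over the product space. -/
theorem stmt7 (M k : ℕ) (hM : 3 ≤ M) (hModd : Odd M) (hk : 1 ≤ k) :
    (1 : ℝ) / k ≤
      (((Fintype.piFinset fun _ : Fin k =>
            Finset.Icc (-(((M : ℤ) - 1) / 2)) (((M : ℤ) - 1) / 2)).filter
          (fun u => ∑ i, u i = 0)).card : ℝ) /
        (((Fintype.piFinset fun _ : Fin k =>
            Finset.Icc (-(((M : ℤ) - 1) / 2)) (((M : ℤ) - 1) / 2)).filter
          (fun u => (M : ℤ) ∣ ∑ i, u i)).card : ℝ) :=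
  stmt7_general M k hM hk
end

section
/- The discrete probability mass function of a sum of independent integer-valued random variables each uniform on a set of consecutive integers is log-concave: if p(t) = Pr[U = t], then p(t)² ≥ p(t−1)·p(t+1) for all integers t. -/
/-!
The number of points of the box `∏ i, [a i, b i]` with coordinate sum `s` is the convolution of
the indicators of the intervals `[a i, b i]`. These indicators are Pólya frequency sequences of
order two, and that class is closed under convolution: writing `h = f ∗ g`, the difference
`h x * h y - h (x - 1) * h (y + 1)` (for `x ≤ y`) is a double sum `∑ i j, c i j * w i j` in which
`c` is antisymmetric, and pairing the terms `(i, j)` and `(j, i)` gives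
`c i j * (w i j - w j i)`, a product of two nonnegative factors by the PF₂ inequalities of `f`
and of `g` respectively.
-/

/-- The probability mass function of the sum of `k` independent random variables,
the `i`-th uniform on the integer interval `{a i, …, b i}`. -/
noncomputable def sumPMF (k : ℕ) (a b : Fin k → ℤ) (s : ℤ) : ℝ :=
  (((Fintype.piFinset fun i => Finset.Icc (a i) (b i)).filter
      (fun u => ∑ i, u i = s)).card : ℝ) /
    ∏ i, ((Finset.Icc (a i) (b i)).card : ℝ)

open Finset
open Fintype (piFinset mem_piFinset)

theorem sum_sum_nonneg_of_antisymm {ι R : Type*} [LinearOrder ι] [CommRing R] [LinearOrder R]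
    [IsStrictOrderedRing R] (T : Finset ι) (c w : ι → ι → R) (hc : ∀ i j, c j i = -c i j)
    (h : ∀ i j, i ≤ j → 0 ≤ c i j * (w i j - w j i)) :
    0 ≤ ∑ i ∈ T, ∑ j ∈ T, c i j * w i j := by
  have hpair : ∀ i j, 0 ≤ c i j * w i j + c j i * w j i := by
    intro i j
    rcases le_total i j with hij | hji
    · have e : c i j * w i j + c j i * w j i = c i j * (w i j - w j i) := by rw [hc]; ring
      exact e ▸ h i j hij
    · have e : c i j * w i j + c j i * w j i = c j i * (w j i - w i j) := by rw [hc j i]; ring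
      exact e ▸ h j i hji
  have hdouble : 2 * ∑ i ∈ T, ∑ j ∈ T, c i j * w i j =
      ∑ i ∈ T, ∑ j ∈ T, (c i j * w i j + c j i * w j i) := by
    rw [two_mul]
    nth_rewrite 2 [sum_comm]
    simp only [← sum_add_distrib]
  have := sum_nonneg fun i (_ : i ∈ T) => sum_nonneg fun j (_ : j ∈ T) => hpair i j
  linarith

/-- Pólya frequency sequences of order two, i.e. nonnegative log-concave sequences without internal
zeros. Asking for the inequality at all `x ≤ y` rather than only at `x = y` is what rules out
internal zeros; plain log-concavity is not preserved by convolution. -/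
structure IsPF2 (f : ℤ → ℝ) : Prop where
  nonneg : ∀ s, 0 ≤ f s
  mul_le : ∀ x y, x ≤ y → f (x - 1) * f (y + 1) ≤ f x * f y

namespace IsPF2

variable {f g : ℤ → ℝ}

theorem mul_le_mul_of_add_eq (hg : IsPF2 g) {a b c d : ℤ} (hab : a ≤ b) (hac : a ≤ c)
    (h : a + d = b + c) : g a * g d ≤ g b * g c := by
  obtain ⟨n, rfl⟩ : ∃ n : ℕ, b = a + n := ⟨(b - a).toNat, by omega⟩
  obtain rfl : d = c + n := by omega
  clear h hab
  induction n generalizing a with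
  | zero => simp [mul_comm]
  | succ n ih =>
    rcases hac.eq_or_lt with rfl | hlt
    · exact (mul_comm _ _).le
    · calc g a * g (c + ↑(n + 1)) = g (a + 1 - 1) * g (c + n + 1) := by push_cast; ring_nf
        _ ≤ g (a + 1) * g (c + n) := hg.mul_le _ _ (by omega)
        _ ≤ g (a + 1 + n) * g c := ih (by omega)
        _ = g (a + ↑(n + 1)) * g c := by push_cast; ring_nf

theorem div_const (hf : IsPF2 f) {c : ℝ} (hc : 0 ≤ c) : IsPF2 fun s => f s / c where
  nonneg s := div_nonneg (hf.nonneg s) hc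
  mul_le x y hxy := by
    simp only [div_mul_div_comm]
    exact div_le_div_of_nonneg_right (hf.mul_le x y hxy) (mul_nonneg hc hc)

theorem conv (hf : IsPF2 f) (hg : IsPF2 g) {S : Finset ℤ}
    (hS : ∀ i ∉ S, f i = 0) : IsPF2 fun s => ∑ i ∈ S, f i * g (s - i) := by
  -- `T` carries the supports of both `f` and `f (· - 1)`, so that all four sums live on it.
  set T := S ∪ S.map (addRightEmbedding 1)
  have hT : ∀ s, ∑ i ∈ S, f i * g (s - i) = ∑ i ∈ T, f i * g (s - i) := fun s =>
    sum_subset subset_union_left fun i _ hi => by rw [hS i hi, zero_mul]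
  have hT_shift : ∀ s, ∑ i ∈ S, f i * g (s - 1 - i) = ∑ i ∈ T, f (i - 1) * g (s - i) := by
    intro s
    rw [← sum_subset subset_union_right, sum_map]
    · refine sum_congr rfl fun i _ => ?_
      simp only [addRightEmbedding_apply, add_sub_cancel_right]
      ring_nf
    · intro i _ hi
      rw [hS (i - 1) fun h => hi (mem_map.2 ⟨i - 1, h, by simp⟩), zero_mul]
  refine ⟨fun s => sum_nonneg fun i _ => mul_nonneg (hf.nonneg i) (hg.nonneg _), fun x y hxy => ?_⟩
  have hy := hT_shift (y + 1)
  simp only [add_sub_cancel_right] at hy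
  have hcw : 0 ≤ ∑ i ∈ T, ∑ j ∈ T,
      (f i * f (j - 1) - f (i - 1) * f j) * (g (x - i) * g (y + 1 - j)) :=
    sum_sum_nonneg_of_antisymm T _ _ (fun i j => by ring) fun i j hij =>
      mul_nonneg (sub_nonneg.2 (hf.mul_le_mul_of_add_eq (by omega) (by omega) (by ring)))
        (sub_nonneg.2 (hg.mul_le_mul_of_add_eq (by omega) (by omega) (by ring)))
  have expand : (∑ i ∈ T, f i * g (x - i)) * (∑ j ∈ T, f (j - 1) * g (y + 1 - j)) -
      (∑ i ∈ T, f (i - 1) * g (x - i)) * (∑ j ∈ T, f j * g (y + 1 - j)) =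
      ∑ i ∈ T, ∑ j ∈ T, (f i * f (j - 1) - f (i - 1) * f j) * (g (x - i) * g (y + 1 - j)) := by
    rw [sum_mul_sum, sum_mul_sum, ← sum_sub_distrib]
    refine sum_congr rfl fun i _ => ?_
    rw [← sum_sub_distrib]
    exact sum_congr rfl fun j _ => by ring
  rw [hT_shift x, hT (y + 1), hT x, hy]
  linarith

end IsPF2

theorem isPF2_indicator_Icc (c d : ℤ) : IsPF2 ((Set.Icc c d).indicator 1) where
  nonneg _ := Set.indicator_nonneg (fun _ _ => zero_le_one) _
  mul_le x y _ := by
    simp only [Set.indicator_apply, Set.mem_Icc, Pi.one_apply]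
    split_ifs <;> norm_num <;> omega

theorem card_filter_piFinset_sum_eq {G : Type*} [AddCommGroup G] [DecidableEq G] {n : ℕ}
    (S : Fin (n + 1) → Finset G) (s : G) :
    #{u ∈ piFinset S | ∑ i, u i = s} =
      ∑ v ∈ S 0, #{w ∈ piFinset (Fin.tail S) | ∑ i, w i = s - v} := by
  rw [card_eq_sum_card_fiberwise (f := fun u => u 0) (t := S 0)
    fun u hu => (mem_piFinset.1 (mem_filter.1 hu).1) 0]
  refine sum_congr rfl fun v hv => card_nbij' Fin.tail (fun w => Fin.cons v w) ?_ ?_ ?_ ?_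
  · intro u hu
    simp only [coe_filter, mem_filter, Fin.mem_piFinset_iff_zero_tail, Fin.sum_univ_succ] at hu ⊢
    obtain ⟨⟨⟨-, ht⟩, hs⟩, rfl⟩ := hu
    exact ⟨ht, eq_sub_of_add_eq' hs⟩
  · intro w hw
    simp only [coe_filter, Set.mem_ofPred_eq, mem_filter] at hw ⊢
    rw [Fin.mem_piFinset_iff_zero_tail, Fin.sum_univ_succ]
    simp only [Fin.cons_zero, Fin.tail_cons, Fin.cons_succ, hw, hv, add_sub_cancel, and_self]
  · intro u hu
    simp only [coe_filter, mem_filter] at hu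
    simp [← hu.2]
  · intro w _
    simp

noncomputable def boxCount (k : ℕ) (a b : Fin k → ℤ) (s : ℤ) : ℝ :=
  #{u ∈ piFinset fun i => Icc (a i) (b i) | ∑ i, u i = s}

theorem boxCount_zero (a b : Fin 0 → ℤ) : boxCount 0 a b = (Set.Icc 0 0).indicator 1 := by
  funext s
  rcases eq_or_ne s 0 with rfl | hs
  · simp [boxCount]
  · simp [boxCount, hs, Ne.symm hs]

theorem boxCount_succ (k : ℕ) (a b : Fin (k + 1) → ℤ) (s : ℤ) :
    boxCount (k + 1) a b s =
      ∑ v ∈ Icc (a 0) (b 0), boxCount k (Fin.tail a) (Fin.tail b) (s - v) := by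
  rw [boxCount, card_filter_piFinset_sum_eq]
  push_cast
  rfl

theorem isPF2_boxCount : ∀ (k : ℕ) (a b : Fin k → ℤ), IsPF2 (boxCount k a b)
  | 0, a, b => boxCount_zero a b ▸ isPF2_indicator_Icc 0 0
  | k + 1, a, b => by
    have h := (isPF2_indicator_Icc (a 0) (b 0)).conv (isPF2_boxCount k (Fin.tail a) (Fin.tail b))
      (S := Icc (a 0) (b 0)) fun i hi => Set.indicator_of_notMem (by simpa using hi) _
    convert h using 1
    funext s
    rw [boxCount_succ]
    refine sum_congr rfl fun v hv => ?_
    rw [Set.indicator_of_mem (by simpa using hv), Pi.one_apply, one_mul]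

theorem isPF2_sumPMF (k : ℕ) (a b : Fin k → ℤ) : IsPF2 (sumPMF k a b) :=
  (isPF2_boxCount k a b).div_const (by positivity)

theorem stmt8_general (k : ℕ) (a b : Fin k → ℤ) (t : ℤ) :
    sumPMF k a b (t - 1) * sumPMF k a b (t + 1) ≤ (sumPMF k a b t) ^ 2 :=
  sq (sumPMF k a b t) ▸ (isPF2_sumPMF k a b).mul_le t t le_rfl

/-- The pmf of a sum of independent random variables, each uniform on a set of
consecutive integers, is log-concave: `p(t)² ≥ p(t-1)·p(t+1)` for all `t`. -/
theorem stmt8 (k : ℕ) (hk : 0 < k) (a b : Fin k → ℤ) (hab : ∀ i, a i ≤ b i) (t : ℤ) :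
    sumPMF k a b (t - 1) * sumPMF k a b (t + 1) ≤ (sumPMF k a b t) ^ 2 :=
  stmt8_general k a b t
end

section
/- Let B' : F_2^{r×m} → [0,1] satisfy B'(x) = 0 whenever x₁ ⊕ ... ⊕ x_k ≠ 0 (k ≥ 1), and let μ = E[B']. Then the sum of squared Fourier–Walsh coefficients of B' over all sets S ⊆ [r]×[m] that are Cartesian products U×V (U ⊆ [r], V ⊆ [m]) is at most 2^m·μ² + 2^{1−m}·μ. -/
/-- The Fourier–Walsh character `χ_S(x) = (-1)^{Σ_{(i,j)∈S} x_{ij}}` on `F₂^{r×m}`. -/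
def walshChar (r m : ℕ) (S : Finset (Fin r × Fin m)) (x : Fin r → Fin m → ZMod 2) : ℝ :=
  (-1 : ℝ) ^ (∑ ij ∈ S, (x ij.1 ij.2).val)

/-- The Fourier–Walsh coefficient `f̂(S) = E_x[f(x)·χ_S(x)]`, `x` uniform on `F₂^{r×m}`. -/
noncomputable def walshCoeff (r m : ℕ) (f : (Fin r → Fin m → ZMod 2) → ℝ)
    (S : Finset (Fin r × Fin m)) : ℝ :=
  (∑ x : Fin r → Fin m → ZMod 2, f x * walshChar r m S x) / 2 ^ (r * m)

lemma aux_zmod2_cases (a : ZMod 2) : a = 0 ∨ a = 1 := by revert a; decide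

lemma aux_sum_symmDiff_zmod2 {α : Type*} [DecidableEq α] (S T : Finset α) (f : α → ZMod 2) :
    ∑ p ∈ symmDiff S T, f p = ∑ p ∈ S, f p + ∑ p ∈ T, f p := by
  have h0 : (S ∪ T) \ (S ∩ T) = symmDiff S T := by
    ext p; simp only [Finset.mem_symmDiff, Finset.mem_sdiff, Finset.mem_union, Finset.mem_inter]
    tauto
  have e1 := Finset.sum_sdiff (f := f) (Finset.inter_subset_union (s := S) (t := T))
  rw [h0] at e1
  have e2 := Finset.sum_union_inter (s₁ := S) (s₂ := T) (f := f)
  have e3 : (∑ p ∈ S ∩ T, f p) + (∑ p ∈ S ∩ T, f p) = 0 := CharTwo.add_self_eq_zero _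
  linear_combination e1 + e2 - e3

lemma aux_walshChar_eq_ite (r m : ℕ) (S : Finset (Fin r × Fin m)) (x : Fin r → Fin m → ZMod 2) :
    walshChar r m S x = if (∑ ij ∈ S, x ij.1 ij.2 : ZMod 2) = 0 then 1 else -1 := by
  unfold walshChar
  have hc : ((∑ ij ∈ S, (x ij.1 ij.2).val : ℕ) : ZMod 2) = ∑ ij ∈ S, x ij.1 ij.2 := by
    rw [Nat.cast_sum]
    exact Finset.sum_congr rfl fun ij _ => ZMod.natCast_rightInverse _
  rcases Nat.even_or_odd (∑ ij ∈ S, (x ij.1 ij.2).val) with he | ho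
  · rw [he.neg_one_pow, if_pos]
    rw [← hc]
    exact (ZMod.natCast_eq_zero_iff _ 2).2 he.two_dvd
  · rw [ho.neg_one_pow, if_neg]
    rw [← hc]
    intro h
    have h2 := (ZMod.natCast_eq_zero_iff _ 2).1 h
    obtain ⟨c, hc⟩ := ho
    omega

lemma aux_walshChar_empty (r m : ℕ) (x : Fin r → Fin m → ZMod 2) :
    walshChar r m ∅ x = 1 := by simp [walshChar]

lemma aux_walshChar_mul (r m : ℕ) (S : Finset (Fin r × Fin m)) (x y : Fin r → Fin m → ZMod 2) :
    walshChar r m S x * walshChar r m S y = walshChar r m S (x + y) := by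
  rw [aux_walshChar_eq_ite, aux_walshChar_eq_ite, aux_walshChar_eq_ite]
  have h : (∑ ij ∈ S, (x + y) ij.1 ij.2 : ZMod 2)
      = (∑ ij ∈ S, x ij.1 ij.2) + ∑ ij ∈ S, y ij.1 ij.2 := by
    rw [← Finset.sum_add_distrib]
    exact Finset.sum_congr rfl fun _ _ => rfl
  rw [h]
  by_cases ha : (∑ ij ∈ S, x ij.1 ij.2 : ZMod 2) = 0 <;>
    by_cases hb : (∑ ij ∈ S, y ij.1 ij.2 : ZMod 2) = 0
  · simp [ha, hb]
  · simp [ha, hb]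
  · simp [ha, hb]
  · rcases aux_zmod2_cases (∑ ij ∈ S, x ij.1 ij.2) with h1 | h1
    · exact absurd h1 ha
    rcases aux_zmod2_cases (∑ ij ∈ S, y ij.1 ij.2) with h2 | h2
    · exact absurd h2 hb
    rw [h1, h2, (by decide : (1 : ZMod 2) + 1 = 0), if_pos rfl,
      if_neg (by decide : ¬(1 : ZMod 2) = 0)]
    norm_num

lemma aux_walshChar_eq_prod (r m : ℕ) (S : Finset (Fin r × Fin m)) (x : Fin r → Fin m → ZMod 2) :
    walshChar r m S x = ∏ p ∈ S, (-1 : ℝ) ^ (x p.1 p.2).val := by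
  unfold walshChar
  exact (Finset.prod_pow_eq_pow_sum S _ _).symm

lemma aux_sum_walshChar (r m : ℕ) (d : Fin r → Fin m → ZMod 2) :
    ∑ S : Finset (Fin r × Fin m), walshChar r m S d
      = if d = 0 then (2 : ℝ) ^ (r * m) else 0 := by
  have h1 : ∑ S : Finset (Fin r × Fin m), walshChar r m S d
      = ∑ S ∈ (Finset.univ : Finset (Fin r × Fin m)).powerset,
          ∏ p ∈ S, (-1 : ℝ) ^ (d p.1 p.2).val := by
    rw [Finset.powerset_univ]
    exact Finset.sum_congr rfl fun S _ => aux_walshChar_eq_prod r m S d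
  have h2 := Finset.prod_add (fun p : Fin r × Fin m => (-1 : ℝ) ^ (d p.1 p.2).val)
      (fun _ => (1 : ℝ)) Finset.univ
  simp only [Finset.prod_const_one, mul_one] at h2
  rw [h1, ← h2]
  by_cases hd : d = 0
  · subst hd
    rw [if_pos rfl]
    have : ∀ p : Fin r × Fin m, ((-1 : ℝ) ^ ((0 : Fin r → Fin m → ZMod 2) p.1 p.2).val + 1) = 2 := by
      intro p; norm_num [ZMod.val_zero]
    rw [Finset.prod_congr rfl fun p _ => this p, Finset.prod_const]
    congr 1
    simp [Fintype.card_prod]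
  · rw [if_neg hd]
    have : ∃ p : Fin r × Fin m, d p.1 p.2 ≠ 0 := by
      by_contra hall
      push_neg at hall
      exact hd (funext fun i => funext fun j => hall (i, j))
    obtain ⟨p₀, hp₀⟩ := this
    apply Finset.prod_eq_zero (Finset.mem_univ p₀)
    rcases aux_zmod2_cases (d p₀.1 p₀.2) with h | h
    · exact absurd h hp₀
    rw [h]
    norm_num [ZMod.val_one]

lemma aux_parseval (r m : ℕ) (f : (Fin r → Fin m → ZMod 2) → ℝ) :
    ∑ S : Finset (Fin r × Fin m), (∑ x : Fin r → Fin m → ZMod 2, f x * walshChar r m S x) ^ 2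
      = 2 ^ (r * m) * ∑ x : Fin r → Fin m → ZMod 2, (f x) ^ 2 := by
  have key : ∀ x y : Fin r → Fin m → ZMod 2,
      ∑ S : Finset (Fin r × Fin m), walshChar r m S x * walshChar r m S y
        = if y = x then (2 : ℝ) ^ (r * m) else 0 := by
    intro x y
    rw [Finset.sum_congr rfl fun S _ => aux_walshChar_mul r m S x y, aux_sum_walshChar]
    congr 1
    simp only [eq_iff_iff]
    constructor
    · intro h
      funext i j
      have := congrFun (congrFun h i) j
      revert this
      have hcase : ∀ a b : ZMod 2, a + b = 0 → b = a := by decide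
      exact fun hh => hcase _ _ hh
    · rintro rfl
      funext i j
      exact CharTwo.add_self_eq_zero _
  calc ∑ S : Finset (Fin r × Fin m), (∑ x : Fin r → Fin m → ZMod 2, f x * walshChar r m S x) ^ 2
      = ∑ S : Finset (Fin r × Fin m), ∑ x : Fin r → Fin m → ZMod 2,
          ∑ y : Fin r → Fin m → ZMod 2, (f x * walshChar r m S x) * (f y * walshChar r m S y) := by
        exact Finset.sum_congr rfl fun S _ => by rw [sq, Finset.sum_mul_sum]
    _ = ∑ x : Fin r → Fin m → ZMod 2, ∑ y : Fin r → Fin m → ZMod 2,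
          ∑ S : Finset (Fin r × Fin m), (f x * walshChar r m S x) * (f y * walshChar r m S y) := by
        rw [Finset.sum_comm]
        exact Finset.sum_congr rfl fun x _ => Finset.sum_comm
    _ = ∑ x : Fin r → Fin m → ZMod 2, ∑ y : Fin r → Fin m → ZMod 2,
          f x * f y * ∑ S : Finset (Fin r × Fin m), walshChar r m S x * walshChar r m S y := by
        refine Finset.sum_congr rfl fun x _ => Finset.sum_congr rfl fun y _ => ?_
        rw [Finset.mul_sum]
        exact Finset.sum_congr rfl fun S _ => by ring
    _ = ∑ x : Fin r → Fin m → ZMod 2, f x * f x * 2 ^ (r * m) := by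
        refine Finset.sum_congr rfl fun x _ => ?_
        rw [Finset.sum_congr rfl fun y (_ : y ∈ Finset.univ) => by rw [key x y]]
        simp only [mul_ite, mul_zero]
        rw [Finset.sum_ite_eq' Finset.univ x (fun y => f x * f y * 2 ^ (r * m)),
          if_pos (Finset.mem_univ x)]
    _ = 2 ^ (r * m) * ∑ x : Fin r → Fin m → ZMod 2, (f x) ^ 2 := by
        rw [Finset.mul_sum]
        exact Finset.sum_congr rfl fun x _ => by ring


lemma aux_prod_symmDiff_right {α β : Type*} [DecidableEq α] [DecidableEq β]
    (K : Finset α) (V₁ V₂ : Finset β) :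
    symmDiff (K ×ˢ V₁) (K ×ˢ V₂) = K ×ˢ (symmDiff V₁ V₂) := by
  ext ⟨i, j⟩
  simp only [Finset.mem_symmDiff, Finset.mem_product]
  tauto

lemma aux_lemX {α β : Type*} [DecidableEq α] [DecidableEq β]
    {K U₁ U₂ : Finset α} {V₁ V₂ V₀ : Finset β}
    (hU₁ : U₁.Nonempty) (hU₁K : U₁ ≠ K) (hU₂ : U₂.Nonempty) (hU₂K : U₂ ≠ K)
    (hV₁ : V₁.Nonempty)
    (h : symmDiff (U₁ ×ˢ V₁) (U₂ ×ˢ V₂) = K ×ˢ V₀) :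
    V₁ = V₂ ∧ (U₁ = U₂ ∨ U₁ = symmDiff U₂ K) := by
  have hmem : ∀ i j, ((i ∈ U₁ ∧ j ∈ V₁) ∧ ¬(i ∈ U₂ ∧ j ∈ V₂) ∨
      (i ∈ U₂ ∧ j ∈ V₂) ∧ ¬(i ∈ U₁ ∧ j ∈ V₁)) ↔ (i ∈ K ∧ j ∈ V₀) := by
    intro i j
    have := Finset.ext_iff.mp h (i, j)
    simpa only [Finset.mem_symmDiff, Finset.mem_product] using this
  have hV : V₁ = V₂ := by
    by_contra hne
    have hex : ∃ j, ¬(j ∈ V₁ ↔ j ∈ V₂) := by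
      by_contra hall
      push_neg at hall
      exact hne (Finset.ext fun j => hall j)
    obtain ⟨j₀, hj₀⟩ := hex
    by_cases hj1 : j₀ ∈ V₁
    · have hj2 : j₀ ∉ V₂ := fun hh => hj₀ ⟨fun _ => hh, fun _ => hj1⟩
      obtain ⟨i₁, hi₁⟩ := hU₁
      have hK1 : i₁ ∈ K ∧ j₀ ∈ V₀ := (hmem i₁ j₀).mp (by tauto)
      refine hU₁K (Finset.ext fun i => ?_)
      have h2 := hmem i j₀
      have hv0 := hK1.2
      tauto
    · have hj2 : j₀ ∈ V₂ := by tauto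
      obtain ⟨i₂, hi₂⟩ := hU₂
      have hK1 : i₂ ∈ K ∧ j₀ ∈ V₀ := (hmem i₂ j₀).mp (by tauto)
      refine hU₂K (Finset.ext fun i => ?_)
      have h2 := hmem i j₀
      have hv0 := hK1.2
      tauto
  subst hV
  refine ⟨rfl, ?_⟩
  obtain ⟨j₁, hj₁⟩ := hV₁
  by_cases hj₀ : j₁ ∈ V₀
  · right
    refine Finset.ext fun i => ?_
    have h2 := hmem i j₁
    rw [Finset.mem_symmDiff]
    tauto
  · left
    refine Finset.ext fun i => ?_
    have h2 := hmem i j₁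
    tauto

set_option maxHeartbeats 2000000 in
lemma aux_fiber_rel {α β : Type*} [DecidableEq α] [DecidableEq β]
    {K U₁ U₂ : Finset α} {V₁ V₂ V₁' V₂' : Finset β}
    (hK : K.Nonempty)
    (hU₁ : U₁.Nonempty) (hU₁K : U₁ ≠ K) (hU₂ : U₂.Nonempty) (hU₂K : U₂ ≠ K)
    (hV₁ : V₁.Nonempty)
    (heq : symmDiff (U₁ ×ˢ V₁) (K ×ˢ V₁') = symmDiff (U₂ ×ˢ V₂) (K ×ˢ V₂')) :
    (U₁ = U₂ ∧ V₁ = V₂ ∧ V₁' = V₂') ∨ U₁ = symmDiff U₂ K := by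
  have hmain : symmDiff (U₁ ×ˢ V₁) (U₂ ×ˢ V₂) = K ×ˢ (symmDiff V₁' V₂') := by
    ext ⟨i, j⟩
    have := Finset.ext_iff.mp heq (i, j)
    simp only [Finset.mem_symmDiff, Finset.mem_product] at this ⊢
    tauto
  obtain ⟨hV, hU⟩ := aux_lemX hU₁ hU₁K hU₂ hU₂K hV₁ hmain
  rcases hU with hU | hU
  · left
    refine ⟨hU, hV, ?_⟩
    rw [hU, hV] at hmain
    have h0 : K ×ˢ (symmDiff V₁' V₂') = ∅ := by
      rw [← hmain]
      ext p
      simp [Finset.mem_symmDiff]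
    rcases Finset.product_eq_empty.mp h0 with h | h
    · exact absurd h hK.ne_empty
    · ext j
      have := Finset.ext_iff.mp h j
      simp only [Finset.mem_symmDiff, Finset.notMem_empty, iff_false] at this
      tauto
  · right; exact hU

/-- Let `B' : F₂^{r×m} → [0,1]` vanish whenever `x₁ ⊕ ⋯ ⊕ x_k ≠ 0`, and let
`μ = E[B']`. Then the sum of `B̂'(S)²` over all Cartesian products
`S = U × V ⊆ [r] × [m]` is at most `2^m·μ² + 2^{1-m}·μ`. -/
theorem stmt14 (r m k : ℕ) (hk : 1 ≤ k) (hkr : k ≤ r) (hm : 1 ≤ m)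
    (B' : (Fin r → Fin m → ZMod 2) → ℝ)
    (hB01 : ∀ x, 0 ≤ B' x ∧ B' x ≤ 1)
    (hBvanish : ∀ x : Fin r → Fin m → ZMod 2,
      (∑ i ∈ Finset.univ.filter (fun i : Fin r => (i : ℕ) < k), x i) ≠ 0 → B' x = 0) :
    ∑ S ∈ Finset.univ.filter
        (fun S : Finset (Fin r × Fin m) =>
          ∃ (U : Finset (Fin r)) (V : Finset (Fin m)), S = U ×ˢ V),
        (walshCoeff r m B' S) ^ 2
      ≤ 2 ^ m * ((∑ x : Fin r → Fin m → ZMod 2, B' x) / 2 ^ (r * m)) ^ 2 +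
        2 ^ (1 - (m : ℤ)) * ((∑ x : Fin r → Fin m → ZMod 2, B' x) / 2 ^ (r * m)) := by
  classical
  set K : Finset (Fin r) := Finset.univ.filter (fun i : Fin r => (i : ℕ) < k) with hKdef
  have hKmem : (⟨0, lt_of_lt_of_le hk hkr⟩ : Fin r) ∈ K := by
    rw [hKdef, Finset.mem_filter]
    exact ⟨Finset.mem_univ _, hk⟩
  have hK : K.Nonempty := ⟨_, hKmem⟩
  set W : Finset (Fin r × Fin m) → ℝ :=
    fun S => ∑ x : Fin r → Fin m → ZMod 2, B' x * walshChar r m S x with hWdef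
  set N : ℝ := (2 : ℝ) ^ (r * m) with hNdef
  have hN0 : (0 : ℝ) < N := by positivity
  have hW0 : W ∅ = ∑ x : Fin r → Fin m → ZMod 2, B' x := by
    rw [hWdef]
    exact Finset.sum_congr rfl fun x _ => by rw [aux_walshChar_empty, mul_one]
  have hμ0 : 0 ≤ W ∅ := by
    rw [hW0]
    exact Finset.sum_nonneg fun x _ => (hB01 x).1
  -- invariance of W under symmetric difference with K ×ˢ V'
  have hWinv : ∀ (S : Finset (Fin r × Fin m)) (V' : Finset (Fin m)),
      W (symmDiff S (K ×ˢ V')) = W S := by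
    intro S V'
    refine Finset.sum_congr rfl fun x _ => ?_
    by_cases hx : B' x = 0
    · rw [hx, zero_mul, zero_mul]
    · congr 1
      have hrow : (∑ i ∈ K, x i) = 0 := by
        by_contra hne
        exact hx (hBvanish x hne)
      have hz : (∑ p ∈ K ×ˢ V', x p.1 p.2 : ZMod 2) = 0 := by
        rw [Finset.sum_product, Finset.sum_comm]
        refine Finset.sum_eq_zero fun j _ => ?_
        calc ∑ i ∈ K, x i j = (∑ i ∈ K, x i) j := by rw [Finset.sum_apply]
          _ = 0 := by rw [hrow]; rfl
      rw [aux_walshChar_eq_ite, aux_walshChar_eq_ite, aux_sum_symmDiff_zmod2, hz, add_zero]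
  have hWK : ∀ V : Finset (Fin m), W (K ×ˢ V) = W ∅ := by
    intro V
    have h0 : symmDiff (∅ : Finset (Fin r × Fin m)) (K ×ˢ V) = K ×ˢ V := by
      ext p
      simp [Finset.mem_symmDiff]
    rw [← h0, hWinv]
  -- injectivity of products
  have hprodinj : ∀ (U₁ U₂ : Finset (Fin r)) (V₁ V₂ : Finset (Fin m)),
      U₁.Nonempty → V₁.Nonempty → U₁ ×ˢ V₁ = U₂ ×ˢ V₂ → U₁ = U₂ ∧ V₁ = V₂ := by
    intro U₁ U₂ V₁ V₂ hU hV h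
    obtain ⟨i₁, hi₁⟩ := hU
    obtain ⟨j₁, hj₁⟩ := hV
    have hmemiff : ∀ (i : Fin r) (j : Fin m), (i ∈ U₁ ∧ j ∈ V₁) ↔ (i ∈ U₂ ∧ j ∈ V₂) := by
      intro i j
      have := Finset.ext_iff.mp h (i, j)
      simpa [Finset.mem_product] using this
    have hij₂ : i₁ ∈ U₂ ∧ j₁ ∈ V₂ := (hmemiff i₁ j₁).mp ⟨hi₁, hj₁⟩
    constructor
    · ext i
      constructor
      · intro hi; exact ((hmemiff i j₁).mp ⟨hi, hj₁⟩).1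
      · intro hi; exact ((hmemiff i j₁).mpr ⟨hi, hij₂.2⟩).1
    · ext j
      constructor
      · intro hj; exact ((hmemiff i₁ j).mp ⟨hi₁, hj⟩).2
      · intro hj; exact ((hmemiff i₁ j).mpr ⟨hij₂.1, hj⟩).2
  set 𝒰 : Finset (Finset (Fin r)) := Finset.univ.filter (fun U => U.Nonempty) with hUdef
  set 𝒱 : Finset (Finset (Fin m)) := Finset.univ.filter (fun V => V.Nonempty) with hVdef
  have hcardV : 𝒱.card = 2 ^ m - 1 := by
    have h1 : 𝒱 = Finset.univ.erase ∅ := by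
      ext V
      simp only [hVdef, Finset.mem_filter, Finset.mem_univ, true_and, Finset.mem_erase,
        Finset.nonempty_iff_ne_empty, and_true]
    rw [h1, Finset.card_erase_of_mem (Finset.mem_univ _), Finset.card_univ,
      Fintype.card_finset, Fintype.card_fin]
  have himage : Finset.univ.filter
        (fun S : Finset (Fin r × Fin m) =>
          ∃ (U : Finset (Fin r)) (V : Finset (Fin m)), S = U ×ˢ V)
      = insert ∅ ((𝒰 ×ˢ 𝒱).image fun p => p.1 ×ˢ p.2) := by
    ext S
    simp only [Finset.mem_filter, Finset.mem_univ, true_and, Finset.mem_insert,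
      Finset.mem_image, Finset.mem_product]
    constructor
    · rintro ⟨U, V, rfl⟩
      rcases U.eq_empty_or_nonempty with rfl | hU
      · left; rw [Finset.empty_product]
      rcases V.eq_empty_or_nonempty with rfl | hV
      · left; rw [Finset.product_empty]
      · right
        exact ⟨(U, V), ⟨by simp [hUdef, hU], by simp [hVdef, hV]⟩, rfl⟩
    · rintro (rfl | ⟨⟨U, V⟩, _, rfl⟩)
      · exact ⟨∅, ∅, (Finset.empty_product _).symm⟩
      · exact ⟨U, V, rfl⟩
  have hnotmem : (∅ : Finset (Fin r × Fin m)) ∉ (𝒰 ×ˢ 𝒱).image fun p => p.1 ×ˢ p.2 := by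
    simp only [Finset.mem_image, Finset.mem_product]
    rintro ⟨⟨U, V⟩, ⟨hU, hV⟩, hprod⟩
    simp only [hUdef, Finset.mem_filter, Finset.mem_univ, true_and] at hU
    simp only [hVdef, Finset.mem_filter, Finset.mem_univ, true_and] at hV
    rcases Finset.product_eq_empty.mp hprod with h | h
    · exact hU.ne_empty h
    · exact hV.ne_empty h
  have hinj : ∀ p ∈ 𝒰 ×ˢ 𝒱, ∀ q ∈ 𝒰 ×ˢ 𝒱,
      (fun p : Finset (Fin r) × Finset (Fin m) => p.1 ×ˢ p.2) p
        = (fun p : Finset (Fin r) × Finset (Fin m) => p.1 ×ˢ p.2) q → p = q := by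
    rintro ⟨U₁, V₁⟩ h₁ ⟨U₂, V₂⟩ h₂ h
    obtain ⟨hU₁, hV₁⟩ := Finset.mem_product.mp h₁
    simp only [hUdef, Finset.mem_filter, Finset.mem_univ, true_and] at hU₁
    simp only [hVdef, Finset.mem_filter, Finset.mem_univ, true_and] at hV₁
    obtain ⟨hU, hV⟩ := hprodinj U₁ U₂ V₁ V₂ hU₁ hV₁ h
    exact Prod.ext hU hV
  -- Parseval
  have hpars : ∑ S : Finset (Fin r × Fin m), (W S) ^ 2
      = N * ∑ x : Fin r → Fin m → ZMod 2, (B' x) ^ 2 := aux_parseval r m B'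
  have hsum2 : ∑ x : Fin r → Fin m → ZMod 2, (B' x) ^ 2 ≤ W ∅ := by
    rw [hW0]
    refine Finset.sum_le_sum fun x _ => ?_
    obtain ⟨h1, h2⟩ := hB01 x
    nlinarith
  -- the fiber map
  set Ψ : (Finset (Fin r) × Finset (Fin m)) × Finset (Fin m) → Finset (Fin r × Fin m) :=
    fun a => symmDiff (a.1.1 ×ˢ a.1.2) (K ×ˢ a.2) with hΨdef
  set A2 : Finset (Finset (Fin r) × Finset (Fin m)) :=
    (𝒰 ×ˢ 𝒱).filter (fun p => ¬p.1 = K) with hA2def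
  have hfibercard : ∀ S : Finset (Fin r × Fin m),
      ((A2 ×ˢ (Finset.univ : Finset (Finset (Fin m)))).filter (fun a => Ψ a = S)).card ≤ 2 := by
    intro S
    by_contra hgt
    push_neg at hgt
    obtain ⟨a, ha, b, hb, c, hc, hab, hac, hbc⟩ := Finset.two_lt_card.mp hgt
    have hprops : ∀ p, p ∈ (A2 ×ˢ (Finset.univ : Finset (Finset (Fin m)))).filter
        (fun a => Ψ a = S) →
        p.1.1.Nonempty ∧ p.1.1 ≠ K ∧ p.1.2.Nonempty ∧ Ψ p = S := by
      intro p hp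
      have hp1 := Finset.mem_filter.mp hp
      have hp2 := Finset.mem_product.mp hp1.1
      have hp3 := Finset.mem_filter.mp hp2.1
      have hp4 := Finset.mem_product.mp hp3.1
      have hU := Finset.mem_filter.mp hp4.1
      have hV := Finset.mem_filter.mp hp4.2
      exact ⟨hU.2, hp3.2, hV.2, hp1.2⟩
    have key : ∀ p q, p ∈ (A2 ×ˢ (Finset.univ : Finset (Finset (Fin m)))).filter
        (fun a => Ψ a = S) →
        q ∈ (A2 ×ˢ (Finset.univ : Finset (Finset (Fin m)))).filter (fun a => Ψ a = S) →
        p ≠ q → p.1.1 = symmDiff q.1.1 K := by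
      intro p q hp hq hpq
      obtain ⟨hpU, hpUK, hpV, hpS⟩ := hprops p hp
      obtain ⟨hqU, hqUK, hqV, hqS⟩ := hprops q hq
      have heq : symmDiff (p.1.1 ×ˢ p.1.2) (K ×ˢ p.2)
          = symmDiff (q.1.1 ×ˢ q.1.2) (K ×ˢ q.2) := hpS.trans hqS.symm
      rcases aux_fiber_rel hK hpU hpUK hqU hqUK hpV heq with ⟨h1, h2, h3⟩ | h
      · exact absurd (Prod.ext (Prod.ext h1 h2) h3) hpq
      · exact h
    have h1 := key a b ha hb hab
    have h2 := key a c ha hc hac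
    have h3 := key b c hb hc hbc
    have hbc' : b.1.1 = c.1.1 := symmDiff_left_injective K (h1.symm.trans h2)
    have hKbot : K = ⊥ := symmDiff_eq_left.mp (h3.symm.trans hbc')
    exact hK.ne_empty (hKbot.trans Finset.bot_eq_empty)
  -- step 1 : 2^m * T₂ = sum over the triple-index family
  have hstep1 : ∑ a ∈ A2 ×ˢ (Finset.univ : Finset (Finset (Fin m))), (W (Ψ a)) ^ 2
      = 2 ^ m * ∑ p ∈ A2, (W (p.1 ×ˢ p.2)) ^ 2 := by
    rw [Finset.sum_product]
    calc ∑ p ∈ A2, ∑ V' : Finset (Fin m), (W (Ψ (p, V'))) ^ 2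
        = ∑ p ∈ A2, ∑ _V' : Finset (Fin m), (W (p.1 ×ˢ p.2)) ^ 2 := by
          refine Finset.sum_congr rfl fun p _ => Finset.sum_congr rfl fun V' _ => ?_
          have : W (Ψ (p, V')) = W (p.1 ×ˢ p.2) := hWinv (p.1 ×ˢ p.2) V'
          rw [this]
      _ = ∑ p ∈ A2, (2 ^ m : ℝ) * (W (p.1 ×ˢ p.2)) ^ 2 := by
          refine Finset.sum_congr rfl fun p _ => ?_
          rw [Finset.sum_const, Finset.card_univ, Fintype.card_finset, Fintype.card_fin,
            nsmul_eq_mul]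
          push_cast
          ring
      _ = 2 ^ m * ∑ p ∈ A2, (W (p.1 ×ˢ p.2)) ^ 2 := (Finset.mul_sum _ _ _).symm
  -- step 2 : fiberwise bound
  have hstep2 : ∑ a ∈ A2 ×ˢ (Finset.univ : Finset (Finset (Fin m))), (W (Ψ a)) ^ 2
      ≤ 2 * (N * ∑ x : Fin r → Fin m → ZMod 2, (B' x) ^ 2) := by
    rw [← Finset.sum_fiberwise_of_maps_to (fun a _ => Finset.mem_univ (Ψ a))
      (fun a => (W (Ψ a)) ^ 2)]
    calc ∑ S : Finset (Fin r × Fin m),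
          ∑ a ∈ (A2 ×ˢ (Finset.univ : Finset (Finset (Fin m)))).filter (fun a => Ψ a = S),
            (W (Ψ a)) ^ 2
        ≤ ∑ S : Finset (Fin r × Fin m), 2 * (W S) ^ 2 := by
          refine Finset.sum_le_sum fun S _ => ?_
          have heval : ∑ a ∈ (A2 ×ˢ (Finset.univ : Finset (Finset (Fin m)))).filter
              (fun a => Ψ a = S), (W (Ψ a)) ^ 2
              = (((A2 ×ˢ (Finset.univ : Finset (Finset (Fin m)))).filter
                  (fun a => Ψ a = S)).card : ℝ) * (W S) ^ 2 := by
            rw [← nsmul_eq_mul, ← Finset.sum_const]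
            refine Finset.sum_congr rfl fun a ha => ?_
            rw [(Finset.mem_filter.mp ha).2]
          rw [heval]
          have hcard := hfibercard S
          have : ((((A2 ×ˢ (Finset.univ : Finset (Finset (Fin m)))).filter
              (fun a => Ψ a = S)).card : ℝ)) ≤ 2 := by exact_mod_cast hcard
          nlinarith [sq_nonneg (W S)]
      _ = 2 * ∑ S : Finset (Fin r × Fin m), (W S) ^ 2 := (Finset.mul_sum _ _ _).symm
      _ = 2 * (N * ∑ x : Fin r → Fin m → ZMod 2, (B' x) ^ 2) := by rw [hpars]
  -- T₂ bound
  have hT2 : ∑ p ∈ A2, (W (p.1 ×ˢ p.2)) ^ 2 ≤ 2 ^ (1 - (m : ℤ)) * N * W ∅ := by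
    have h2m : (0 : ℝ) < 2 ^ m := by positivity
    have hmain : (2 : ℝ) ^ m * ∑ p ∈ A2, (W (p.1 ×ˢ p.2)) ^ 2 ≤ 2 * (N * W ∅) := by
      rw [← hstep1]
      refine le_trans hstep2 ?_
      nlinarith [hsum2, hN0]
    have hzpow : (2 : ℝ) ^ (1 - (m : ℤ)) = 2 / 2 ^ m := by
      rw [zpow_sub₀ (two_ne_zero), zpow_one, zpow_natCast]
    rw [hzpow, div_mul_eq_mul_div, div_mul_eq_mul_div, le_div_iff₀ h2m]
    nlinarith [hmain]
  -- assemble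
  rw [himage, Finset.sum_insert hnotmem, Finset.sum_image hinj]
  rw [← Finset.sum_filter_add_sum_filter_not (𝒰 ×ˢ 𝒱) (fun p => p.1 = K)]
  have hKin𝒰 : K ∈ 𝒰 := by
    rw [hUdef, Finset.mem_filter]
    exact ⟨Finset.mem_univ _, hK⟩
  have hfilK : ∑ p ∈ (𝒰 ×ˢ 𝒱).filter (fun p => p.1 = K),
      (walshCoeff r m B' (p.1 ×ˢ p.2)) ^ 2
      = ((2 : ℝ) ^ m - 1) * (walshCoeff r m B' ∅) ^ 2 := by
    have hset : (𝒰 ×ˢ 𝒱).filter (fun p => p.1 = K) = {K} ×ˢ 𝒱 := by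
      ext ⟨U, V⟩
      simp only [Finset.mem_filter, Finset.mem_product, Finset.mem_singleton]
      constructor
      · rintro ⟨⟨_, hV⟩, rfl⟩; exact ⟨rfl, hV⟩
      · rintro ⟨rfl, hV⟩; exact ⟨⟨hKin𝒰, hV⟩, rfl⟩
    rw [hset, Finset.sum_product, Finset.sum_singleton]
    have hterm : ∀ V ∈ 𝒱, (walshCoeff r m B' (K ×ˢ V)) ^ 2 = (walshCoeff r m B' ∅) ^ 2 := by
      intro V _
      have hcoef : walshCoeff r m B' (K ×ˢ V) = walshCoeff r m B' ∅ := by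
        show W (K ×ˢ V) / N = W ∅ / N
        rw [hWK]
      rw [hcoef]
    rw [Finset.sum_congr rfl hterm, Finset.sum_const, hcardV, nsmul_eq_mul]
    have h1 : (1 : ℕ) ≤ 2 ^ m := Nat.one_le_two_pow
    rw [Nat.cast_sub h1]
    push_cast
    ring
  rw [hfilK]
  -- identify coefficients
  have hcoefE : walshCoeff r m B' ∅
      = (∑ x : Fin r → Fin m → ZMod 2, B' x) / N := by
    show W ∅ / N = _
    rw [hW0]
  have hA2coef : ∑ p ∈ (𝒰 ×ˢ 𝒱).filter (fun p => ¬p.1 = K),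
      (walshCoeff r m B' (p.1 ×ˢ p.2)) ^ 2
      = (∑ p ∈ A2, (W (p.1 ×ˢ p.2)) ^ 2) / N ^ 2 := by
    rw [hA2def, Finset.sum_div]
    refine Finset.sum_congr rfl fun p _ => ?_
    show (W (p.1 ×ˢ p.2) / N) ^ 2 = _
    rw [div_pow]
  rw [hA2coef, hcoefE]
  have hfinal : (∑ p ∈ A2, (W (p.1 ×ˢ p.2)) ^ 2) / N ^ 2
      ≤ 2 ^ (1 - (m : ℤ)) * ((∑ x : Fin r → Fin m → ZMod 2, B' x) / N) := by
    have hdiv : (∑ p ∈ A2, (W (p.1 ×ˢ p.2)) ^ 2) / N ^ 2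
        ≤ (2 ^ (1 - (m : ℤ)) * N * W ∅) / N ^ 2 :=
      div_le_div_of_nonneg_right hT2 (by positivity)
    refine le_trans hdiv ?_
    have heq : (2 ^ (1 - (m : ℤ)) * N * W ∅) / N ^ 2
        = 2 ^ (1 - (m : ℤ)) * (W ∅ / N) := by
      field_simp
    rw [heq, hW0]
  linarith [hfinal]
end

section
/- Let B' : F_2^{r×m} → [0,1] be defined from an algorithm B on F_2^{r×m} by B'(x) = E_{P,T̄}[1{B(T̄(P(x))) = P(K)}] where K = {1,...,k}, P is a uniform permutation of the r rows, and T̄ a uniform invertible linear map on F_2^m applied to each row. If B always outputs either a k-subset R of [r] with the XOR of rows indexed by R equal to 0, or failure, then E_x[B'(x)] ≤ 1/binom(r,k) when x is uniform on F_2^{r×m}. -/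
/-!
For a fixed seed `ω` and matrix `T`, `x ↦ T̄(P(x))` is a bijection of `F₂^{r×m}`, so the
number of successes is `∑_y #{P | P(K) = B_ω(y)}`. Every output of `B` is a `k`-set, and the
permutations sending `K` onto a given `k`-set form a coset of the stabiliser of `K`, which has
`r! / binom(r, k)` elements by counting over the orbit of `K`.
-/

open Finset

open scoped Pointwise

namespace Equiv.Perm

variable {α : Type*} [DecidableEq α]

theorem exists_smul_finset_eq {s t : Finset α} (h : #s = #t) : ∃ σ : Perm α, σ • s = t := by
  have := Set.powersetCard.isPretransitive (α := α) (n := #t)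
  obtain ⟨σ, hσ⟩ := MulAction.exists_smul_eq (Perm α)
    (⟨s, h⟩ : Set.powersetCard α #t) ⟨t, rfl⟩
  exact ⟨σ, congrArg Subtype.val hσ⟩

variable [Fintype α]

theorem card_filter_smul_finset_eq {s t : Finset α} (h : #s = #t) :
    #{σ : Perm α | σ • s = t} = #{σ : Perm α | σ • s = s} := by
  obtain ⟨τ, rfl⟩ := exists_smul_finset_eq h
  refine card_equiv (Equiv.mulLeft τ⁻¹) fun σ => ?_
  simp [mul_smul, inv_smul_eq_iff]

theorem card_eq_choose_mul_card_filter_smul_finset_eq (s : Finset α) :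
    Fintype.card (Perm α) = (Fintype.card α).choose #s * #{σ : Perm α | σ • s = s} := by
  rw [← card_univ, card_eq_sum_card_fiberwise (f := (· • s)) (t := powersetCard #s univ)
    fun σ _ => mem_powersetCard.2 ⟨subset_univ _, card_smul_finset σ s⟩,
    sum_congr rfl fun t ht => ?_, sum_const, card_powersetCard, card_univ, smul_eq_mul]
  exact card_filter_smul_finset_eq (mem_powersetCard.1 ht).2.symm

theorem sum_indicator_smul_finset_eq_le (s : Finset α) (o : Option (Finset α))
    (ho : ∀ t, o = some t → #t = #s) :
    ∑ σ : Perm α, (if o = some (σ • s) then (1 : ℝ) else 0)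
      ≤ Fintype.card (Perm α) / (Fintype.card α).choose #s := by
  have hchoose : 0 < (Fintype.card α).choose #s := Nat.choose_pos (card_le_univ s)
  rw [sum_boole, le_div_iff₀ (by exact_mod_cast hchoose)]
  rcases o with _ | t
  · simp
  · rw [card_eq_choose_mul_card_filter_smul_finset_eq s,
      ← card_filter_smul_finset_eq (ho t rfl).symm]
    simp [eq_comm, mul_comm]

end Equiv.Perm

open Equiv

theorem sum_sum_perm_indicator_image_le {α Y : Type*} [Fintype α] [DecidableEq α] [Fintype Y]
    (s : Finset α) (f : Y → Option (Finset α)) (hf : ∀ y t, f y = some t → #t = #s)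
    (g : Perm α → Y → Y) (hg : ∀ σ, Function.Bijective (g σ)) :
    ∑ y, ∑ σ : Perm α, (if f (g σ y) = some (s.image σ) then (1 : ℝ) else 0)
      ≤ Fintype.card Y * (Fintype.card (Perm α) / (Fintype.card α).choose #s) := by
  calc ∑ y, ∑ σ : Perm α, (if f (g σ y) = some (s.image σ) then (1 : ℝ) else 0)
      = ∑ y, ∑ σ : Perm α, (if f y = some (σ • s) then (1 : ℝ) else 0) := by
        rw [sum_comm, sum_comm (γ := Y)]
        exact sum_congr rfl fun σ _ =>
          (hg σ).sum_comp fun y => if f y = some (σ • s) then (1 : ℝ) else 0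
    _ ≤ ∑ _y : Y, (Fintype.card (Perm α) / (Fintype.card α).choose #s : ℝ) :=
        sum_le_sum fun y _ => Perm.sum_indicator_smul_finset_eq_le s (f y) (hf y)
    _ = _ := by simp

theorem bijective_mulVec_comp_perm {ι n R : Type*} [Fintype n] [DecidableEq n] [Finite ι]
    [Finite R] [CommRing R] {A : Matrix n n R} (hA : IsUnit A) (σ : Perm ι) :
    Function.Bijective fun x : ι → n → R => fun i => A.mulVec (x (σ⁻¹ i)) := by
  refine Finite.injective_iff_bijective.1 fun x y hxy => funext fun i => ?_
  simpa using Matrix.mulVec_injective_of_isUnit hA (congrFun hxy (σ i))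

theorem stmt15_general (r m k : ℕ) (hkr : k ≤ r)
    (Ω : Type*) [Fintype Ω]
    (B : Ω → (Fin r → Fin m → ZMod 2) → Option (Finset (Fin r)))
    (hB : ∀ (ω : Ω) (x : Fin r → Fin m → ZMod 2) (R : Finset (Fin r)),
      B ω x = some R → R.card = k ∧ (∑ i ∈ R, x i) = 0) :
    (∑ x : Fin r → Fin m → ZMod 2,
        (∑ ω : Ω, ∑ P : Equiv.Perm (Fin r),
            ∑ T : Matrix.GeneralLinearGroup (Fin m) (ZMod 2),
            (if B ω (fun i => (T : Matrix (Fin m) (Fin m) (ZMod 2)).mulVec (x (P⁻¹ i)))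
                = some ((Finset.univ.filter (fun i : Fin r => (i : ℕ) < k)).image P)
              then (1 : ℝ) else 0)) /
          (Fintype.card Ω * Fintype.card (Equiv.Perm (Fin r)) *
            Fintype.card (Matrix.GeneralLinearGroup (Fin m) (ZMod 2)))) /
        2 ^ (r * m)
      ≤ 1 / (r.choose k : ℝ) := by
  set K := univ.filter fun i : Fin r => (i : ℕ) < k
  have hK : #K = k := by simp [K, Fin.card_filter_val_lt, hkr]
  have hfixed : ∀ ω (T : Matrix.GeneralLinearGroup (Fin m) (ZMod 2)),
      ∑ x : Fin r → Fin m → ZMod 2, ∑ P : Perm (Fin r),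
        (if B ω (fun i => (T : Matrix (Fin m) (Fin m) (ZMod 2)).mulVec (x (P⁻¹ i)))
          = some (K.image P) then (1 : ℝ) else 0)
        ≤ 2 ^ (r * m) * (Fintype.card (Perm (Fin r)) / r.choose k) := by
    intro ω T
    have := sum_sum_perm_indicator_image_le K (B ω) (fun x R hR => hK ▸ (hB ω x R hR).1) _
      fun P => bijective_mulVec_comp_perm T.isUnit P
    simpa [hK, Fintype.card_fun, ZMod.card, ← pow_mul, mul_comm m r] using this
  have hω : ∀ ω, ∑ x : Fin r → Fin m → ZMod 2, ∑ P : Perm (Fin r),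
      ∑ T : Matrix.GeneralLinearGroup (Fin m) (ZMod 2),
        (if B ω (fun i => (T : Matrix (Fin m) (Fin m) (ZMod 2)).mulVec (x (P⁻¹ i)))
          = some (K.image P) then (1 : ℝ) else 0)
      ≤ Fintype.card (Matrix.GeneralLinearGroup (Fin m) (ZMod 2)) *
          (2 ^ (r * m) * (Fintype.card (Perm (Fin r)) / r.choose k)) := by
    intro ω
    rw [sum_congr rfl fun x _ => sum_comm, sum_comm]
    refine (sum_le_sum fun T _ => hfixed ω T).trans_eq ?_
    rw [sum_const, card_univ, nsmul_eq_mul]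
  rw [← sum_div, div_div, sum_comm]
  refine div_le_of_le_mul₀ (by positivity) (by positivity)
    ((sum_le_sum fun ω _ => hω ω).trans_eq ?_)
  simp only [sum_const, card_univ, nsmul_eq_mul]
  ring

/-- Let `B` be a (possibly randomized, with seed `ω : Ω`) algorithm on `F₂^{r×m}`
that outputs either a `k`-subset `R` of the rows whose XOR is `0`, or failure
(`none`). Define `B'(x) = E_{ω,P,T̄}[1{B_ω(T̄(P(x))) = P(K)}]` where `K = {1,…,k}`,
`P` is a uniform permutation of the rows and `T̄` a uniform invertible linear map
(given by a matrix in `GL_m(F₂)`) applied to each row. Then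
`E_x[B'(x)] ≤ 1/binom(r,k)` for `x` uniform on `F₂^{r×m}`. -/
theorem stmt15 (r m k : ℕ) (hk : 1 ≤ k) (hkr : k ≤ r) (hm : 1 ≤ m)
    (Ω : Type*) [Fintype Ω] [Nonempty Ω] [DecidableEq Ω]
    (B : Ω → (Fin r → Fin m → ZMod 2) → Option (Finset (Fin r)))
    (hB : ∀ (ω : Ω) (x : Fin r → Fin m → ZMod 2) (R : Finset (Fin r)),
      B ω x = some R → R.card = k ∧ (∑ i ∈ R, x i) = 0) :
    (∑ x : Fin r → Fin m → ZMod 2,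
        (∑ ω : Ω, ∑ P : Equiv.Perm (Fin r),
            ∑ T : Matrix.GeneralLinearGroup (Fin m) (ZMod 2),
            (if B ω (fun i => (T : Matrix (Fin m) (Fin m) (ZMod 2)).mulVec (x (P⁻¹ i)))
                = some ((Finset.univ.filter (fun i : Fin r => (i : ℕ) < k)).image P)
              then (1 : ℝ) else 0)) /
          (Fintype.card Ω * Fintype.card (Equiv.Perm (Fin r)) *
            Fintype.card (Matrix.GeneralLinearGroup (Fin m) (ZMod 2)))) /
        2 ^ (r * m)
      ≤ 1 / (r.choose k : ℝ) :=
  stmt15_general r m k hkr Ω B hB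
end

section
/- Let u₁,...,u_r be independent random variables in Z_p defined by u_i = round(α·v_i/q) mod p, where α is uniform in (Z_{pq})^* and v_i are i.i.d. uniform in {(1−q)/2, ..., (q−1)/2}, with p ≥ q primes. For any nonzero S ∈ (Z_p)^r, Pr[⟨S,u⟩ = 0 mod p] ≤ C·(1/q + 1/p) for an absolute constant C. -/
/-!
Split according to whether `⟨S, v⟩ ≡ 0 (mod p)`. The entries of `v` lie in an interval of
length `q ≤ p`, on which reduction mod `p` is injective, so a nonzero linear form vanishes on at
most a `1/q` fraction of the vectors `v`. If `⟨S, v⟩ ≢ 0`, then `α` is determined by `α mod q`: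
changing `α` by `q e` shifts every `u_i` by exactly `e v_i`, hence `⟨S, u⟩` by `e ⟨S, v⟩`, so two
solutions differ by a multiple of `pq`. This leaves at most `q` of the `φ(pq) ≥ pq/3` units,
and the bound holds with `C = 3`.
-/

open Finset

theorem round_add_mul_mul_div {α : Type*} [Field α] [LinearOrder α] [IsStrictOrderedRing α]
    [FloorRing α] {q : α} (hq : q ≠ 0) (b : α) (e y : ℤ) :
    round ((b + q * e) * y / q) = round (b * y / q) + e * y := by
  rw [← round_add_intCast]
  congr 1
  push_cast
  field_simp

theorem ZMod.injOn_intCast_Icc_of_sub_lt {p : ℕ} {a b : ℤ} (h : b - a < p) :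
    Set.InjOn (Int.cast : ℤ → ZMod p) (Set.Icc a b) := by
  intro x hx y hy hxy
  have hdvd : (p : ℤ) ∣ y - x := (ZMod.intCast_eq_intCast_iff_dvd_sub x y p).mp hxy
  have hlt : |y - x| < p := by
    rw [abs_lt]; constructor <;> linarith [hx.1, hx.2, hy.1, hy.2]
  linarith [Int.eq_zero_of_abs_lt_dvd hdvd hlt]

theorem card_Icc_centered_of_odd {q : ℕ} (hq : Odd q) :
    #(Icc ((1 - (q : ℤ)) / 2) (((q : ℤ) - 1) / 2)) = q := by
  obtain ⟨s, rfl⟩ := hq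
  rw [Int.card_Icc]
  push_cast
  omega

theorem card_filter_piFinset_sum_mul_eq_zero_le {K : Type*} [Ring K] [NoZeroDivisors K]
    [DecidableEq K] {n : ℕ} {I : Finset ℤ} (hI : Set.InjOn (Int.cast : ℤ → K) I)
    {S : Fin (n + 1) → K} (hS : S ≠ 0) :
    #{v ∈ Fintype.piFinset fun _ => I | ∑ i, S i * (v i : K) = 0} ≤ #I ^ n := by
  obtain ⟨i₀, hi₀⟩ := Function.ne_iff.mp hS
  refine (card_le_card_of_injOn (Fin.removeNth i₀) ?_ ?_).trans
    (by simp : #(Fintype.piFinset fun _ : Fin n => I) ≤ #I ^ n)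
  · intro v hv
    simp only [coe_filter, Fintype.mem_piFinset, Set.mem_ofPred_eq, mem_coe,
      Fin.removeNth_apply] at hv ⊢
    exact fun j => hv.1 _
  · intro v hv w hw hvw
    simp only [coe_filter, Fintype.mem_piFinset, Set.mem_ofPred_eq] at hv hw
    -- the equation determines the `i₀`-th coordinate from the others
    have hsum : S i₀ * (v i₀ : K) = S i₀ * (w i₀ : K) := by
      have hv' := hv.2; have hw' := hw.2
      rw [Fin.sum_univ_succAbove _ i₀] at hv' hw'
      simp only [← Fin.removeNth_apply i₀ v, ← Fin.removeNth_apply i₀ w, hvw] at hv' hw'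
      exact add_right_cancel (hv'.trans hw'.symm)
    have h₀ : v i₀ = w i₀ := hI (hv.1 i₀) (hw.1 i₀) (mul_left_cancel₀ hi₀ hsum)
    rw [← Fin.insertNth_self_removeNth i₀ v, ← Fin.insertNth_self_removeNth i₀ w, hvw, h₀]

/-- `⟨S, u⟩` for the rounded vector `u_i = round (a v_i / q)`. -/
def roundedPairing {ι : Type*} [Fintype ι] (p q : ℕ) (S : ι → ZMod p) (a : ℕ) (v : ι → ℤ) :
    ZMod p :=
  ∑ i, S i * ((round ((a : ℚ) * (v i : ℚ) / q) : ℤ) : ZMod p)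

section RoundedPairing

variable {ι : Type*} [Fintype ι] {p q : ℕ} {S : ι → ZMod p} {v : ι → ℤ}

theorem roundedPairing_of_eq_add_mul (hq : q ≠ 0) {a b : ℕ} {e : ℤ}
    (hab : (a : ℤ) = b + q * e) :
    roundedPairing p q S a v = roundedPairing p q S b v + e * ∑ i, S i * (v i : ZMod p) := by
  have hab' : (a : ℚ) = b + q * e := by exact_mod_cast hab
  have hq' : (q : ℚ) ≠ 0 := Nat.cast_ne_zero.mpr hq
  simp only [roundedPairing, hab', round_add_mul_mul_div hq', mul_sum, ← sum_add_distrib]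
  exact sum_congr rfl fun i _ => by push_cast; ring

theorem eq_of_roundedPairing_eq_zero [Fact p.Prime]
    (hSv : ∑ i, S i * (v i : ZMod p) ≠ 0) {a b : ℕ} (ha : a < p * q) (hb : b < p * q)
    (hab : a % q = b % q) (hA : roundedPairing p q S a v = 0)
    (hB : roundedPairing p q S b v = 0) : a = b := by
  have hq : q ≠ 0 := by rintro rfl; simp at ha
  obtain ⟨e, he⟩ : (q : ℤ) ∣ a - b := Int.ModEq.dvd (by exact_mod_cast hab.symm)
  have he0 : (e : ZMod p) * ∑ i, S i * (v i : ZMod p) = 0 := by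
    simpa [hA, hB] using
      roundedPairing_of_eq_add_mul (S := S) (v := v) hq (by linarith : (a : ℤ) = b + q * e)
  obtain ⟨c, rfl⟩ := (ZMod.intCast_zmod_eq_zero_iff_dvd e p).mp
    ((mul_eq_zero.mp he0).resolve_right hSv)
  refine Nat.ModEq.eq_of_lt_of_lt (Nat.modEq_iff_dvd.mpr ⟨-c, ?_⟩) ha hb
  push_cast; linarith

theorem card_filter_units_roundedPairing_eq_zero_le [Fact p.Prime] [NeZero (p * q)]
    (hSv : ∑ i, S i * (v i : ZMod p) ≠ 0) :
    #{α : (ZMod (p * q))ˣ | roundedPairing p q S (α : ZMod (p * q)).val v = 0} ≤ q := by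
  have hq : q ≠ 0 := right_ne_zero_of_mul (NeZero.ne (p * q))
  refine (card_le_card_of_injOn (fun α : (ZMod (p * q))ˣ => (α : ZMod (p * q)).val % q)
    (fun α _ => mem_range.mpr (Nat.mod_lt _ (Nat.pos_of_ne_zero hq))) ?_).trans (card_range q).le
  intro α hα β hβ hαβ
  simp only [coe_filter, mem_univ, true_and, Set.mem_ofPred_eq] at hα hβ
  exact Units.ext <| ZMod.val_injective _ <|
    eq_of_roundedPairing_eq_zero hSv (ZMod.val_lt _) (ZMod.val_lt _) hαβ hα hβ

end RoundedPairing

theorem card_filter_product_le_of_card_fiber_le {α β : Type*} {s : Finset α} {t : Finset β}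
    (P : α × β → Prop) [DecidablePred P] (A : β → Prop) [DecidablePred A] {k : ℕ}
    (h : ∀ b ∈ t, ¬ A b → #{a ∈ s | P (a, b)} ≤ k) :
    #{x ∈ s ×ˢ t | P x} ≤ #s * #{b ∈ t | A b} + k * #t := by
  calc #{x ∈ s ×ˢ t | P x} = ∑ b ∈ t, #{a ∈ s | P (a, b)} := by
        simp only [card_filter, sum_product_right]
    _ ≤ ∑ b ∈ t, ((if A b then #s else 0) + k) := by
        refine sum_le_sum fun b hb => ?_
        split_ifs with hA
        · exact (card_filter_le _ _).trans (Nat.le_add_right _ _)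
        · exact (h b hb hA).trans (Nat.le_add_left _ _)
    _ = #s * #{b ∈ t | A b} + k * #t := by
        rw [sum_add_distrib, ← sum_filter, sum_const, sum_const, smul_eq_mul, smul_eq_mul]
        ring

theorem Nat.mul_le_three_mul_totient_mul {p q : ℕ} (hp : p.Prime) (hq : q.Prime) (hp3 : 3 ≤ p)
    (hq3 : 3 ≤ q) : p * q ≤ 3 * (p * q).totient := by
  have h := Nat.totient_super_multiplicative p q
  rw [Nat.totient_prime hp, Nat.totient_prime hq] at h
  obtain ⟨p', rfl⟩ : ∃ p', p = p' + 3 := ⟨p - 3, by omega⟩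
  obtain ⟨q', rfl⟩ : ∃ q', q = q' + 3 := ⟨q - 3, by omega⟩
  have h' : (p' + 2) * (q' + 2) ≤ ((p' + 3) * (q' + 3)).totient := h
  nlinarith

theorem cast_div_le_three_mul_inv_add_inv {N T X p q : ℕ} (hT : 0 < T) (hX : 0 < X) (hp : 0 < p)
    (hpq : p * q ≤ 3 * T) (hN : N ≤ T * X + q * (q * X)) :
    (N : ℝ) / (T * (q * X) : ℕ) ≤ 3 * (1 / (q : ℝ) + 1 / (p : ℝ)) := by
  have hq' : (q : ℝ) ≤ 3 * T / p := by
    rw [le_div_iff₀ (by exact_mod_cast hp)]; exact_mod_cast (mul_comm q p).trans_le hpq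
  rcases q.eq_zero_or_pos with rfl | hq
  · simp
  rw [div_le_iff₀ (by positivity)]
  push_cast
  calc (N : ℝ) ≤ T * X + q * (q * X) := by exact_mod_cast hN
    _ ≤ 3 * (T * X) + 3 * T / p * (q * X) :=
        add_le_add (by linarith [show (0 : ℝ) ≤ T * X by positivity]) (by gcongr)
    _ = 3 * (1 / q + 1 / p) * (T * (q * X)) := by field_simp

/-- Littlewood–Offord-type bound: there is an absolute constant `C` such that for
all primes `p ≥ q` (odd) and every nonzero `S ∈ (Z_p)^r`, if `α` is uniform in
`(Z_{pq})^*`, the `v_i` are i.i.d. uniform in `{(1-q)/2, …, (q-1)/2}` and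
`u_i = round(α·v_i/q) mod p`, then `Pr[⟨S,u⟩ = 0 (mod p)] ≤ C·(1/q + 1/p)`.
The probability is expressed as a counting fraction over the pairs `(α, v)`. -/
theorem stmt16 :
    ∃ C : ℝ, 0 < C ∧
      ∀ (p q r : ℕ) [NeZero p] [NeZero (p * q)],
        p.Prime → q.Prime → Odd p → Odd q → q ≤ p → 0 < r →
        ∀ S : Fin r → ZMod p, S ≠ 0 →
        ((((Finset.univ : Finset (ZMod (p * q))ˣ) ×ˢ Fintype.piFinset fun _ : Fin r =>
              Finset.Icc ((1 - (q : ℤ)) / 2) (((q : ℤ) - 1) / 2)).filter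
            (fun αv : (ZMod (p * q))ˣ × (Fin r → ℤ) =>
              (∑ i, S i *
                ((round ((((αv.1 : ZMod (p * q)).val : ℚ) * (αv.2 i : ℚ)) / (q : ℚ))
                  : ℤ) : ZMod p)) = 0)).card : ℝ) /
          (((Finset.univ : Finset (ZMod (p * q))ˣ) ×ˢ Fintype.piFinset fun _ : Fin r =>
              Finset.Icc ((1 - (q : ℤ)) / 2) (((q : ℤ) - 1) / 2)).card : ℝ)
          ≤ C * (1 / (q : ℝ) + 1 / (p : ℝ)) := by
  refine ⟨3, by norm_num, fun p q r _ _ hp hq _ hq_odd hqp hr S hS => ?_⟩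
  have := Fact.mk hp
  obtain ⟨n, rfl⟩ : ∃ n, r = n + 1 := ⟨r - 1, by omega⟩
  have hq3 : 3 ≤ q := by obtain ⟨s, rfl⟩ := hq_odd; have := hq.two_le; omega
  set I := Icc ((1 - (q : ℤ)) / 2) (((q : ℤ) - 1) / 2) with hI_def
  have hI : #I = q := card_Icc_centered_of_odd hq_odd
  have hI_inj : Set.InjOn (Int.cast : ℤ → ZMod p) I := by
    rw [hI_def, coe_Icc]
    exact ZMod.injOn_intCast_Icc_of_sub_lt (by have := (Nat.cast_le (α := ℤ)).mpr hqp; omega)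
  have hcount : #{x ∈ (univ : Finset (ZMod (p * q))ˣ) ×ˢ Fintype.piFinset (fun _ => I) |
      roundedPairing p q S (x.1 : ZMod (p * q)).val x.2 = 0} ≤
      (p * q).totient * q ^ n + q * (q * q ^ n) := by
    calc _ ≤ #(univ : Finset (ZMod (p * q))ˣ) *
            #{v ∈ Fintype.piFinset (fun _ => I) | ∑ i, S i * (v i : ZMod p) = 0} +
            q * #(Fintype.piFinset fun _ : Fin (n + 1) => I) :=
          card_filter_product_le_of_card_fiber_le _ _ fun _ _ hv =>
            card_filter_units_roundedPairing_eq_zero_le hv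
      _ ≤ (p * q).totient * q ^ n + q * (q * q ^ n) := by
          rw [card_univ, ZMod.card_units_eq_totient, Fintype.card_piFinset_const, hI]
          gcongr
          · exact hI ▸ card_filter_piFinset_sum_mul_eq_zero_le hI_inj hS
          · exact (pow_succ' q n).le
  have htotal : #((univ : Finset (ZMod (p * q))ˣ) ×ˢ Fintype.piFinset fun _ : Fin (n + 1) => I) =
      (p * q).totient * (q * q ^ n) := by
    rw [card_product, card_univ, ZMod.card_units_eq_totient, Fintype.card_piFinset_const, hI,
      pow_succ']
  rw [htotal]
  exact cast_div_le_three_mul_inv_add_inv (Nat.totient_pos.mpr (NeZero.pos _)) (by positivity)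
    hp.pos (Nat.mul_le_three_mul_totient_mul hp hq (hq3.trans hqp) hq3) hcount
end

section
/- Let p,q be odd primes with p ≥ q, and α uniform in (Z_{pq})^*. Define Z_α = {σ ∈ {(1−q)/2,...,(q−1)/2} : ασ mod pq lies in (−q,q) mod pq}. Then E_α[|Z_α|] ≤ C·(1 + q/p) for an absolute constant C. -/
/-!
Swap the two sums: `∑_α |Z_α| = ∑_σ #{α : ασ ∈ (-q, q)}`. The term `σ = 0` contributes
`φ(pq)`. Every other `σ` is a unit modulo `pq` (as `0 < |σ| < q ≤ p`), so `α ↦ ασ` is injective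
and the term is at most the number `2q` of residues in `(-q, q)`. Hence
`E_α[|Z_α|] ≤ 1 + 2q² / φ(pq)`, and `φ(pq) ≥ (p - 1)(q - 1) ≥ pq / 4`.
-/

open Finset
open scoped Nat

namespace ZMod

lemma card_filter_val_lt_or_lt_val_le (n : ℕ) [NeZero n] (m : ℕ) :
    #{x : ZMod n | x.val < m ∨ n - m < x.val} ≤ 2 * m := by
  have hlow : #{x : ZMod n | x.val < m} ≤ m := by
    simpa using card_le_card_of_injOn (t := range m) val
      (fun x hx => mem_range.mpr (mem_filter.mp hx).2) (val_injective n).injOn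
  have hhigh : #{x : ZMod n | n - m < x.val} ≤ m := by
    have := card_le_card_of_injOn (s := {x : ZMod n | n - m < x.val}) (t := Ico (n - m) n) val
      (fun x hx => mem_Ico.mpr ⟨(mem_filter.mp hx).2.le, val_lt x⟩) (val_injective n).injOn
    rw [Nat.card_Ico] at this
    omega
  rw [filter_or]
  exact (card_union_le _ _).trans (by omega)

lemma isUnit_intCast_mul_of_natAbs_lt {p q : ℕ} (hp : p.Prime) (hq : q.Prime) (hqp : q ≤ p)
    {σ : ℤ} (hσ : σ ≠ 0) (hσq : σ.natAbs < q) : IsUnit (σ : ZMod (p * q)) := by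
  have hσ' : σ.natAbs ≠ 0 := Int.natAbs_ne_zero.mpr hσ
  have hu : IsUnit (σ.natAbs : ZMod (p * q)) := (isUnit_iff_coprime _ _).mpr <|
    (Nat.coprime_of_lt_prime hσ' (by omega) hp).symm.mul_right
      (Nat.coprime_of_lt_prime hσ' hσq hq).symm
  rcases Int.natAbs_eq σ with h | h <;> rw [h]
  · simpa using hu
  · simpa using hu.neg

end ZMod

lemma card_units_filter_mul_le {M : Type*} [Monoid M] [Fintype M] [DecidableEq M] {u : M}
    (hu : IsUnit u) (P : M → Prop) [DecidablePred P] :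
    #{α : Mˣ | P (α * u)} ≤ #{x : M | P x} :=
  card_le_card_of_injOn (fun α : Mˣ => (α : M) * u)
    (fun α hα => by simpa using hα) (fun _ _ _ _ h => Units.ext (hu.mul_right_cancel h))

lemma sum_card_filter_mul_near_zero_le {n : ℕ} [NeZero n] (m : ℕ) (S : Finset ℤ)
    (hS : ∀ σ ∈ S, σ ≠ 0 → IsUnit (σ : ZMod n)) :
    ∑ α : (ZMod n)ˣ, #(S.filter fun σ : ℤ =>
        ((α : ZMod n) * (σ : ZMod n)).val < m ∨ n - m < ((α : ZMod n) * (σ : ZMod n)).val)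
      ≤ Fintype.card (ZMod n)ˣ + #S * (2 * m) := by
  set E := Fintype.card (ZMod n)ˣ
  have hterm : ∀ σ ∈ S, #{α : (ZMod n)ˣ |
      ((α : ZMod n) * (σ : ZMod n)).val < m ∨ n - m < ((α : ZMod n) * (σ : ZMod n)).val}
        ≤ (if σ = 0 then E else 0) + 2 * m := by
    intro σ hσ
    split_ifs with h0
    · exact (card_filter_le _ _).trans (by simp [E])
    · exact (card_units_filter_mul_le (hS σ hσ h0) _).trans
        (ZMod.card_filter_val_lt_or_lt_val_le n m) |>.trans (by omega)
  calc _ = ∑ σ ∈ S, #{α : (ZMod n)ˣ |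
          ((α : ZMod n) * (σ : ZMod n)).val < m ∨ n - m < ((α : ZMod n) * (σ : ZMod n)).val} :=
        sum_card_bipartiteAbove_eq_sum_card_bipartiteBelow _
    _ ≤ ∑ σ ∈ S, ((if σ = 0 then E else 0) + 2 * m) := sum_le_sum hterm
    _ = (if (0 : ℤ) ∈ S then E else 0) + #S * (2 * m) := by
        rw [sum_add_distrib, sum_ite_eq', sum_const, smul_eq_mul]
    _ ≤ E + #S * (2 * m) := by split_ifs <;> omega

lemma Nat.Prime.le_two_mul_totient {p : ℕ} (hp : p.Prime) : p ≤ 2 * φ p := by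
  rw [Nat.totient_prime hp]
  have := hp.two_le
  omega

lemma Nat.mul_le_four_mul_totient_mul_of_prime {p q : ℕ} (hp : p.Prime) (hq : q.Prime) :
    p * q ≤ 4 * φ (p * q) :=
  calc p * q ≤ (2 * φ p) * (2 * φ q) := Nat.mul_le_mul hp.le_two_mul_totient hq.le_two_mul_totient
    _ = 4 * (φ p * φ q) := by ring
    _ ≤ 4 * φ (p * q) := Nat.mul_le_mul_left 4 (Nat.totient_super_multiplicative p q)

lemma card_Icc_symm_half_le (q : ℕ) : #(Icc ((1 - (q : ℤ)) / 2) (((q : ℤ) - 1) / 2)) ≤ q := by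
  rw [Int.card_Icc]
  omega

lemma natAbs_lt_of_mem_Icc_symm_half {q : ℕ} {σ : ℤ}
    (hσ : σ ∈ Icc ((1 - (q : ℤ)) / 2) (((q : ℤ) - 1) / 2)) : σ.natAbs < q := by
  rw [mem_Icc] at hσ
  omega

lemma div_le_eight_mul_one_add_div {T E k p q : ℝ} (hp : 0 < p) (hq : 0 ≤ q) (hE : 0 < E)
    (hT : T ≤ E + k * (2 * q)) (hk : k ≤ q) (hpq : p * q ≤ 4 * E) : T / E ≤ 8 * (1 + q / p) := by
  rw [div_le_iff₀ hE]
  have : q * (2 * q) ≤ 8 * (q / p) * E := by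
    rw [mul_assoc, div_mul_eq_mul_div, mul_div_assoc', le_div_iff₀ hp]
    nlinarith
  nlinarith

/-- There is an absolute constant `C` such that for all odd primes `p ≥ q`, if
`α` is uniform in `(Z_{pq})^*` and
`Z_α = {σ ∈ {(1-q)/2,…,(q-1)/2} : (ασ mod pq) < q or (ασ mod pq) > pq - q}`,
then `E_α[|Z_α|] ≤ C·(1 + q/p)`. -/
theorem stmt17 :
    ∃ C : ℝ, 0 < C ∧
      ∀ (p q : ℕ) [NeZero (p * q)],
        p.Prime → q.Prime → Odd p → Odd q → q ≤ p →
        (∑ α : (ZMod (p * q))ˣ,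
            (((Finset.Icc ((1 - (q : ℤ)) / 2) (((q : ℤ) - 1) / 2)).filter
                (fun σ : ℤ =>
                  ((α : ZMod (p * q)) * (σ : ZMod (p * q))).val < q ∨
                    p * q - q < ((α : ZMod (p * q)) * (σ : ZMod (p * q))).val)).card : ℝ)) /
          (Fintype.card (ZMod (p * q))ˣ : ℝ)
          ≤ C * (1 + (q : ℝ) / (p : ℝ)) := by
  refine ⟨8, by norm_num, fun p q _ hp hq _ _ hqp => ?_⟩
  have hsum := Nat.cast_le (α := ℝ) |>.mpr <| sum_card_filter_mul_near_zero_le q _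
    fun σ hσ hσ0 =>
      ZMod.isUnit_intCast_mul_of_natAbs_lt hp hq hqp hσ0 (natAbs_lt_of_mem_Icc_symm_half hσ)
  push_cast at hsum
  have htot : p * q ≤ 4 * Fintype.card (ZMod (p * q))ˣ := by
    rw [ZMod.card_units_eq_totient]
    exact Nat.mul_le_four_mul_totient_mul_of_prime hp hq
  exact div_le_eight_mul_one_add_div (by exact_mod_cast hp.pos) q.cast_nonneg
    (by exact_mod_cast Fintype.card_pos) hsum
    (by exact_mod_cast card_Icc_symm_half_le q) (by exact_mod_cast htot)
end

section
/- Let p, q be primes and let z be uniform in Z_{pq}, with α uniform in (Z_{pq})^* and γ uniform in Z_p^*, all independent. Then x := γ·round(α·z/q) mod p is uniformly distributed in Z_p, and moreover, writing α·z mod pq = q·(γ^{−1}·x mod p) + v with v ∈ {(1−q)/2,...,(q−1)/2}, the pair (x,v) is uniform on Z_p × {(1−q)/2,...,(q−1)/2} and independent of (α,γ). -/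
/-! Write `n = (α z).val ∈ [0, p q)` and `n = q w + v` with `w = round (n / q)`, so that
`-q ≤ 2 v < q` (Mathlib's `round` rounds halves up). Since `q w + v` depends on `w` only
modulo `p` when read modulo `p q`, the pair `(w mod p, v)` determines `n`, and every pair with `v`
in range is attained by `n = (q w + v) mod p q`. Composing with the bijections `z ↦ α z` and
`w ↦ γ w` gives the theorem. -/

theorem round_intCast_mul_add_div {K : Type*} [Field K] [LinearOrder K] [IsStrictOrderedRing K]
    [FloorRing K] {q : ℕ} (a b : ℤ) (hb₁ : -(q : ℤ) ≤ 2 * b) (hb₂ : 2 * b < q) :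
    round ((((q : ℤ) * a + b : ℤ) : K) / q) = a := by
  have hq : (0 : K) < q := by exact_mod_cast (show (0 : ℤ) < q by omega)
  have hb₁' : -(q : K) ≤ 2 * b := by exact_mod_cast hb₁
  have hb₂' : 2 * (b : K) < q := by exact_mod_cast hb₂
  have hsplit : (((q : ℤ) * a + b : ℤ) : K) / q = b / q + a := by
    push_cast; field_simp; ring
  have hround : round ((b : K) / q) = 0 := by
    rw [round_eq_zero_iff, Set.mem_Ico, le_div_iff₀ hq, div_lt_iff₀ hq]
    constructor <;> linarith
  rw [hsplit, round_add_intCast, hround, zero_add]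

theorem ZMod.existsUnique_round_val_div_eq {p q : ℕ} [NeZero (p * q)] (c : ZMod p) {v : ℤ}
    (hv : v ∈ Finset.Icc ((1 - (q : ℤ)) / 2) (((q : ℤ) - 1) / 2)) :
    ∃! y : ZMod (p * q), ((round ((y.val : ℚ) / q) : ℤ) : ZMod p) = c ∧
      (y.val : ℤ) - q * round ((y.val : ℚ) / q) = v := by
  obtain ⟨w, rfl⟩ := ZMod.intCast_surjective c
  rw [Finset.mem_Icc] at hv
  refine ⟨((q * w + v : ℤ) : ZMod (p * q)), ?_, ?_⟩
  · set n : ℤ := q * w + v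
    have hval : (((n : ZMod (p * q)).val : ℕ) : ℤ) = q * (w - p * (n / (p * q))) + v := by
      rw [ZMod.val_intCast, Int.emod_def]; push_cast; ring
    have hround : round ((((n : ZMod (p * q)).val : ℕ) : ℚ) / q) = w - p * (n / (p * q)) := by
      rw [← Int.cast_natCast, hval]; exact round_intCast_mul_add_div _ _ (by omega) (by omega)
    refine ⟨?_, ?_⟩
    · rw [hround]; push_cast; simp
    · rw [hround, hval]; ring
  · rintro y ⟨hw, hrem⟩
    have hmod : round ((y.val : ℚ) / q) ≡ w [ZMOD p] := (ZMod.intCast_eq_intCast_iff _ _ _).mp hw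
    have hy : (y.val : ℤ) = q * round ((y.val : ℚ) / q) + v := by omega
    rw [← ZMod.natCast_zmod_val y, ← Int.cast_natCast, ZMod.intCast_eq_intCast_iff, hy,
      Nat.cast_mul, mul_comm (p : ℤ)]
    exact hmod.mul_left'.add_right v

theorem stmt18_general (p q : ℕ)
    [NeZero (p * q)]
    (α : (ZMod (p * q))ˣ) (γ : (ZMod p)ˣ) :
    ∀ (x₀ : ZMod p) (v₀ : ℤ),
      v₀ ∈ Finset.Icc ((1 - (q : ℤ)) / 2) (((q : ℤ) - 1) / 2) →
      ∃! z : ZMod (p * q),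
        (γ : ZMod p) *
            ((round (((((α : ZMod (p * q)) * z).val : ℚ)) / (q : ℚ)) : ℤ) : ZMod p)
          = x₀ ∧
        ((((α : ZMod (p * q)) * z).val : ℤ) -
            (q : ℤ) * round (((((α : ZMod (p * q)) * z).val : ℚ)) / (q : ℚ)))
          = v₀ := by
  intro x₀ v₀ hv
  simp only [← Units.eq_inv_mul_iff_mul_eq]
  exact (Units.mulLeft α).bijective.existsUnique_iff.mp
    (ZMod.existsUnique_round_val_div_eq _ hv)

/-- Let `p, q` be odd primes, `z` uniform in `Z_{pq}`, `α ∈ (Z_{pq})^*` and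
`γ ∈ Z_p^*`. Set `x = γ·round(α·z/q) mod p` and let `v` be defined by the unique
decomposition `α·z mod pq = q·(γ⁻¹·x mod p) + v` with
`v ∈ {(1-q)/2,…,(q-1)/2}`, i.e. `v = (α·z mod pq) - q·round((α·z mod pq)/q)`.
Then for every fixed `α, γ`, the map `z ↦ (x, v)` is a bijection from `Z_{pq}`
onto `Z_p × {(1-q)/2,…,(q-1)/2}`; consequently `(x, v)` is uniform on that
product and independent of `(α, γ)`, and in particular `x` is uniform in `Z_p`. -/
theorem stmt18 (p q : ℕ) (hp : p.Prime) (hq : q.Prime) (hop : Odd p) (hoq : Odd q)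
    [NeZero p] [NeZero (p * q)]
    (α : (ZMod (p * q))ˣ) (γ : (ZMod p)ˣ) :
    ∀ (x₀ : ZMod p) (v₀ : ℤ),
      v₀ ∈ Finset.Icc ((1 - (q : ℤ)) / 2) (((q : ℤ) - 1) / 2) →
      ∃! z : ZMod (p * q),
        (γ : ZMod p) *
            ((round (((((α : ZMod (p * q)) * z).val : ℚ)) / (q : ℚ)) : ℤ) : ZMod p)
          = x₀ ∧
        ((((α : ZMod (p * q)) * z).val : ℤ) -
            (q : ℤ) * round (((((α : ZMod (p * q)) * z).val : ℚ)) / (q : ℚ)))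
          = v₀ :=
  stmt18_general p q α γ
end
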